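/- arXiv:1211.2882 — 10 statements merged into one kernel-verified Lean document; each statement's English description precedes it below -/
import Mathlib

section
/- Let α₁, α₂, β₁, β₂ ≥ 0 with min(α₁,α₂) ≤ min(β₁,β₂) and α₁ + α₂ ≤ β₁ + β₂, and suppose the multisets {α₁,α₂} and {β₁,β₂} are not equal. Then the function x ↦ Γ(x+α₁)Γ(x+α₂)/(Γ(x+β₁)Γ(x+β₂)) is strictly decreasing on (0,∞). -/
open Real Filter Finset Topology

lemma fact_le (a₁ a₂ b₁ b₂ x y c : ℝ) (hx : 0 < x) (hy : 0 < y) (hxy : x ≤ y) (hc : 0 ≤ c)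
    (hs : a₁ + a₂ ≤ b₁ + b₂) (hp : a₁ * a₂ ≤ b₁ * b₂)
    (hsp : (b₁ + b₂) * (a₁ * a₂) ≤ (a₁ + a₂) * (b₁ * b₂)) :
    (y + b₁ + c) * (y + b₂ + c) * ((x + a₁ + c) * (x + a₂ + c)) ≤
      (x + b₁ + c) * (x + b₂ + c) * ((y + a₁ + c) * (y + a₂ + c)) := by
  have h1 : 0 ≤ (y - x) * (x * y) * ((b₁ + b₂) - (a₁ + a₂)) :=
    mul_nonneg (mul_nonneg (by linarith) (by positivity)) (by linarith)
  have h2i : 0 ≤ (b₁ * b₂ - a₁ * a₂) + c * ((b₁ + b₂) - (a₁ + a₂)) :=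
    add_nonneg (by linarith) (mul_nonneg hc (by linarith))
  have h2 : 0 ≤ (y - x) * (x + y) * ((b₁ * b₂ - a₁ * a₂) + c * ((b₁ + b₂) - (a₁ + a₂))) :=
    mul_nonneg (mul_nonneg (by linarith) (by linarith)) h2i
  have h3i : 0 ≤ ((a₁ + a₂) * (b₁ * b₂) - (b₁ + b₂) * (a₁ * a₂)) + 2 * c * (b₁ * b₂ - a₁ * a₂)
      + c * c * ((b₁ + b₂) - (a₁ + a₂)) := by
    have := mul_nonneg hc (sub_nonneg.2 hp)
    have := mul_nonneg (mul_nonneg hc hc) (sub_nonneg.2 hs)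
    nlinarith
  have h3 : 0 ≤ (y - x) * (((a₁ + a₂) * (b₁ * b₂) - (b₁ + b₂) * (a₁ * a₂))
      + 2 * c * (b₁ * b₂ - a₁ * a₂) + c * c * ((b₁ + b₂) - (a₁ + a₂))) :=
    mul_nonneg (by linarith) h3i
  nlinarith [h1, h2, h3]

lemma fact_lt (a₁ a₂ b₁ b₂ x y : ℝ) (hx : 0 < x) (hy : 0 < y) (hxy : x < y)
    (hs : a₁ + a₂ ≤ b₁ + b₂) (hp : a₁ * a₂ ≤ b₁ * b₂)
    (hsp : (b₁ + b₂) * (a₁ * a₂) ≤ (a₁ + a₂) * (b₁ * b₂))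
    (hlt : a₁ + a₂ < b₁ + b₂ ∨ a₁ * a₂ < b₁ * b₂) :
    (y + b₁) * (y + b₂) * ((x + a₁) * (x + a₂)) <
      (x + b₁) * (x + b₂) * ((y + a₁) * (y + a₂)) := by
  have h3 : 0 ≤ (y - x) * ((a₁ + a₂) * (b₁ * b₂) - (b₁ + b₂) * (a₁ * a₂)) :=
    mul_nonneg (by linarith) (by linarith)
  rcases hlt with h | h
  · have h1 : 0 < (y - x) * (x * y) * ((b₁ + b₂) - (a₁ + a₂)) :=
      mul_pos (mul_pos (by linarith) (by positivity)) (by linarith)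
    have h2 : 0 ≤ (y - x) * (x + y) * (b₁ * b₂ - a₁ * a₂) :=
      mul_nonneg (mul_nonneg (by linarith) (by linarith)) (by linarith)
    nlinarith [h1, h2, h3]
  · have h1 : 0 ≤ (y - x) * (x * y) * ((b₁ + b₂) - (a₁ + a₂)) :=
      mul_nonneg (mul_nonneg (by linarith) (by positivity)) (by linarith)
    have h2 : 0 < (y - x) * (x + y) * (b₁ * b₂ - a₁ * a₂) :=
      mul_pos (mul_pos (by linarith) (by linarith)) (by linarith)
    nlinarith [h1, h2, h3]

lemma sym_ineqs (a₁ a₂ b₁ b₂ : ℝ) (ha : 0 ≤ a₁) (h12 : a₁ ≤ a₂) (h34 : b₁ ≤ b₂)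
    (hab : a₁ ≤ b₁) (hsum : a₁ + a₂ ≤ b₁ + b₂) :
    a₁ * a₂ ≤ b₁ * b₂ ∧ (b₁ + b₂) * (a₁ * a₂) ≤ (a₁ + a₂) * (b₁ * b₂) := by
  have h1 : 0 ≤ (b₁ - a₁) * (b₂ - a₁) := mul_nonneg (by linarith) (by linarith)
  have h2 : 0 ≤ a₁ * (b₁ + b₂ - a₁ - a₂) := mul_nonneg ha (by linarith)
  have hpa : a₁ * a₂ ≤ b₁ * b₂ := by nlinarith
  refine ⟨hpa, ?_⟩
  nlinarith [mul_nonneg (ha.trans h12) h1, mul_nonneg ha (sub_nonneg.2 hpa)]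

lemma gs_identity (α₁ α₂ β₁ β₂ : ℝ) (hα₁ : 0 ≤ α₁) (hα₂ : 0 ≤ α₂) (hβ₁ : 0 ≤ β₁) (hβ₂ : 0 ≤ β₂)
    (t : ℝ) (ht : 0 < t) (n : ℕ) (hn : 0 < n) :
    (∏ j ∈ range (n+1), ((t + β₁ + j) * (t + β₂ + j)) / ((t + α₁ + j) * (t + α₂ + j)))
      = (Real.GammaSeq (t + α₁) n * Real.GammaSeq (t + α₂) n) /
          (Real.GammaSeq (t + β₁) n * Real.GammaSeq (t + β₂) n) *
        (n : ℝ) ^ (β₁ + β₂ - α₁ - α₂) := by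
  have hn0 : (0:ℝ) < n := by exact_mod_cast hn
  have ppos : ∀ γ : ℝ, 0 ≤ γ → 0 < ∏ j ∈ range (n+1), (t + γ + (j:ℝ)) := by
    intro γ hγ
    exact Finset.prod_pos fun j _ => by positivity
  have pa1 := (ppos α₁ hα₁).ne'
  have pa2 := (ppos α₂ hα₂).ne'
  have pb1 := (ppos β₁ hβ₁).ne'
  have pb2 := (ppos β₂ hβ₂).ne'
  have hfac : ((n.factorial : ℕ) : ℝ) ≠ 0 := by positivity
  have r1 : (0:ℝ) < (n:ℝ) ^ (t + α₁) := rpow_pos_of_pos hn0 _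
  have r2 : (0:ℝ) < (n:ℝ) ^ (t + α₂) := rpow_pos_of_pos hn0 _
  have r3 : (0:ℝ) < (n:ℝ) ^ (t + β₁) := rpow_pos_of_pos hn0 _
  have r4 : (0:ℝ) < (n:ℝ) ^ (t + β₂) := rpow_pos_of_pos hn0 _
  have hpow : (n:ℝ) ^ (β₁ + β₂ - α₁ - α₂)
      = ((n:ℝ) ^ (t + β₁) * (n:ℝ) ^ (t + β₂)) / ((n:ℝ) ^ (t + α₁) * (n:ℝ) ^ (t + α₂)) := by
    rw [← Real.rpow_add hn0, ← Real.rpow_add hn0, ← Real.rpow_sub hn0]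
    ring_nf
  rw [Finset.prod_div_distrib, Finset.prod_mul_distrib, Finset.prod_mul_distrib]
  simp only [Real.GammaSeq]
  rw [hpow]
  field_simp

theorem stmt_5 (α₁ α₂ β₁ β₂ : ℝ) (hα₁ : 0 ≤ α₁) (hα₂ : 0 ≤ α₂) (hβ₁ : 0 ≤ β₁) (hβ₂ : 0 ≤ β₂)
    (hmin : min α₁ α₂ ≤ min β₁ β₂) (hsum : α₁ + α₂ ≤ β₁ + β₂)
    (hne : ({α₁, α₂} : Multiset ℝ) ≠ ({β₁, β₂} : Multiset ℝ)) :
    StrictAntiOn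
      (fun x : ℝ =>
        Real.Gamma (x + α₁) * Real.Gamma (x + α₂) /
          (Real.Gamma (x + β₁) * Real.Gamma (x + β₂)))
      (Set.Ioi 0) := by
  -- symmetric function inequalities
  obtain ⟨hP, hSP⟩ : α₁ * α₂ ≤ β₁ * β₂ ∧ (β₁ + β₂) * (α₁ * α₂) ≤ (α₁ + α₂) * (β₁ * β₂) := by
    rcases le_total α₁ α₂ with h | h <;> rcases le_total β₁ β₂ with h' | h'
    · have := sym_ineqs α₁ α₂ β₁ β₂ hα₁ h h'
        (by simpa [min_eq_left h, min_eq_left h'] using hmin) hsum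
      exact ⟨by linarith [this.1], by nlinarith [this.2]⟩
    · have := sym_ineqs α₁ α₂ β₂ β₁ hα₁ h h'
        (by simpa [min_eq_left h, min_eq_right h'] using hmin) (by linarith)
      exact ⟨by linarith [this.1], by nlinarith [this.2]⟩
    · have := sym_ineqs α₂ α₁ β₁ β₂ hα₂ h h'
        (by simpa [min_eq_right h, min_eq_left h'] using hmin) (by linarith)
      exact ⟨by linarith [this.1], by nlinarith [this.2]⟩
    · have := sym_ineqs α₂ α₁ β₂ β₁ hα₂ h h'
        (by simpa [min_eq_right h, min_eq_right h'] using hmin) (by linarith)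
      exact ⟨by linarith [this.1], by nlinarith [this.2]⟩
  have hlt : α₁ + α₂ < β₁ + β₂ ∨ α₁ * α₂ < β₁ * β₂ := by
    rcases lt_or_eq_of_le hsum with h | h
    · exact Or.inl h
    rcases lt_or_eq_of_le hP with h' | h'
    · exact Or.inr h'
    exfalso; apply hne
    have hz : (α₁ - β₁) * (α₁ - β₂) = 0 := by nlinarith
    rcases mul_eq_zero.1 hz with h0 | h0
    · have e1 : α₁ = β₁ := by linarith
      have e2 : α₂ = β₂ := by linarith
      rw [e1, e2]
    · have e1 : α₁ = β₂ := by linarith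
      have e2 : α₂ = β₁ := by linarith
      rw [e1, e2]
      exact Multiset.cons_swap _ _ _
  intro x hx y hy hxy
  simp only [Set.mem_Ioi] at hx hy
  -- positivity of factors
  have hTpos : ∀ (j : ℕ) (t : ℝ), 0 < t →
      (0 : ℝ) < ((t + β₁ + j) * (t + β₂ + j)) / ((t + α₁ + j) * (t + α₂ + j)) := by
    intro j t ht
    have hj : (0:ℝ) ≤ j := Nat.cast_nonneg j
    apply div_pos <;> apply mul_pos <;> linarith
  have hTle : ∀ j : ℕ,
      ((y + β₁ + j) * (y + β₂ + j)) / ((y + α₁ + j) * (y + α₂ + j)) ≤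
      ((x + β₁ + j) * (x + β₂ + j)) / ((x + α₁ + j) * (x + α₂ + j)) := by
    intro j
    have hj : (0:ℝ) ≤ j := Nat.cast_nonneg j
    rw [div_le_div_iff₀ (by apply mul_pos <;> linarith) (by apply mul_pos <;> linarith)]
    exact fact_le α₁ α₂ β₁ β₂ x y j hx hy hxy.le hj hsum hP hSP
  have hTlt : ((y + β₁ + (0:ℕ)) * (y + β₂ + (0:ℕ))) / ((y + α₁ + (0:ℕ)) * (y + α₂ + (0:ℕ))) <
      ((x + β₁ + (0:ℕ)) * (x + β₂ + (0:ℕ))) / ((x + α₁ + (0:ℕ)) * (x + α₂ + (0:ℕ))) := by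
    push_cast
    rw [div_lt_div_iff₀ (by apply mul_pos <;> linarith) (by apply mul_pos <;> linarith)]
    simpa using fact_lt α₁ α₂ β₁ β₂ x y hx hy hxy hsum hP hSP hlt
  set T : ℕ → ℝ → ℝ :=
    fun j t => ((t + β₁ + j) * (t + β₂ + j)) / ((t + α₁ + j) * (t + α₂ + j)) with hT
  set F : ℕ → ℝ → ℝ := fun n t => ∏ j ∈ range (n+1), T j t with hF
  have hFpos : ∀ (n : ℕ) (t : ℝ), 0 < t → 0 < F n t := by
    intro n t ht
    exact Finset.prod_pos fun j _ => hTpos j t ht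
  -- the ratio bound for each n
  have hbound : ∀ n : ℕ, T 0 x / T 0 y ≤ F n x / F n y := by
    intro n
    have h0x : 0 < T 0 x := hTpos 0 x hx
    have h0y : 0 < T 0 y := hTpos 0 y hy
    rw [div_le_div_iff₀ h0y (hFpos n y hy)]
    have tail : (∏ j ∈ range n, T (j+1) y) ≤ ∏ j ∈ range n, T (j+1) x :=
      Finset.prod_le_prod (fun j _ => (hTpos (j+1) y hy).le) (fun j _ => hTle (j+1))
    have e1 : F n x = (∏ j ∈ range n, T (j+1) x) * T 0 x := Finset.prod_range_succ' _ _
    have e2 : F n y = (∏ j ∈ range n, T (j+1) y) * T 0 y := Finset.prod_range_succ' _ _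
    rw [e1, e2]
    nlinarith [mul_le_mul_of_nonneg_right tail (mul_pos h0x h0y).le]
  -- convergence of the ratio
  have hGpos : ∀ γ t : ℝ, 0 ≤ γ → 0 < t → 0 < Real.Gamma (t + γ) := by
    intro γ t hγ ht
    exact Real.Gamma_pos_of_pos (by linarith)
  have hlim : Tendsto (fun n => F n x / F n y) atTop
      (𝓝 ((Real.Gamma (x + α₁) * Real.Gamma (x + α₂) /
            (Real.Gamma (x + β₁) * Real.Gamma (x + β₂))) /
          (Real.Gamma (y + α₁) * Real.Gamma (y + α₂) /
            (Real.Gamma (y + β₁) * Real.Gamma (y + β₂))))) := by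
    have hax : Tendsto (fun n => (Real.GammaSeq (x + α₁) n * Real.GammaSeq (x + α₂) n) /
        (Real.GammaSeq (x + β₁) n * Real.GammaSeq (x + β₂) n)) atTop
        (𝓝 (Real.Gamma (x + α₁) * Real.Gamma (x + α₂) /
          (Real.Gamma (x + β₁) * Real.Gamma (x + β₂)))) :=
      Tendsto.div ((Real.GammaSeq_tendsto_Gamma _).mul (Real.GammaSeq_tendsto_Gamma _))
        ((Real.GammaSeq_tendsto_Gamma _).mul (Real.GammaSeq_tendsto_Gamma _))
        (mul_pos (hGpos β₁ x hβ₁ hx) (hGpos β₂ x hβ₂ hx)).ne'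
    have hay : Tendsto (fun n => (Real.GammaSeq (y + α₁) n * Real.GammaSeq (y + α₂) n) /
        (Real.GammaSeq (y + β₁) n * Real.GammaSeq (y + β₂) n)) atTop
        (𝓝 (Real.Gamma (y + α₁) * Real.Gamma (y + α₂) /
          (Real.Gamma (y + β₁) * Real.Gamma (y + β₂)))) :=
      Tendsto.div ((Real.GammaSeq_tendsto_Gamma _).mul (Real.GammaSeq_tendsto_Gamma _))
        ((Real.GammaSeq_tendsto_Gamma _).mul (Real.GammaSeq_tendsto_Gamma _))
        (mul_pos (hGpos β₁ y hβ₁ hy) (hGpos β₂ y hβ₂ hy)).ne'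
    have hq := hax.div hay
      (div_pos (mul_pos (hGpos α₁ y hα₁ hy) (hGpos α₂ y hα₂ hy))
        (mul_pos (hGpos β₁ y hβ₁ hy) (hGpos β₂ y hβ₂ hy))).ne'
    refine hq.congr' ?_
    filter_upwards [eventually_gt_atTop 0] with n hn
    have hn0 : (0:ℝ) < n := by exact_mod_cast hn
    have ex := gs_identity α₁ α₂ β₁ β₂ hα₁ hα₂ hβ₁ hβ₂ x hx n hn
    have ey := gs_identity α₁ α₂ β₁ β₂ hα₁ hα₂ hβ₁ hβ₂ y hy n hn
    simp only [Pi.div_apply, hF, hT]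
    rw [ex, ey, mul_div_mul_right _ _ (rpow_pos_of_pos hn0 _).ne']
  -- conclude
  have hTlt' : T 0 y < T 0 x := hTlt
  have h0y' : 0 < T 0 y := hTpos 0 y hy
  have hr1 : 1 < T 0 x / T 0 y := (one_lt_div h0y').2 hTlt'
  have hle : T 0 x / T 0 y ≤
      (Real.Gamma (x + α₁) * Real.Gamma (x + α₂) /
        (Real.Gamma (x + β₁) * Real.Gamma (x + β₂))) /
      (Real.Gamma (y + α₁) * Real.Gamma (y + α₂) /
        (Real.Gamma (y + β₁) * Real.Gamma (y + β₂))) :=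
    ge_of_tendsto hlim (Eventually.of_forall hbound)
  have hfy : 0 < Real.Gamma (y + α₁) * Real.Gamma (y + α₂) /
      (Real.Gamma (y + β₁) * Real.Gamma (y + β₂)) :=
    div_pos (mul_pos (hGpos α₁ y hα₁ hy) (hGpos α₂ y hα₂ hy))
      (mul_pos (hGpos β₁ y hβ₁ hy) (hGpos β₂ y hβ₂ hy))
  have : 1 < (Real.Gamma (x + α₁) * Real.Gamma (x + α₂) /
      (Real.Gamma (x + β₁) * Real.Gamma (x + β₂))) /
      (Real.Gamma (y + α₁) * Real.Gamma (y + α₂) /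
        (Real.Gamma (y + β₁) * Real.Gamma (y + β₂))) := lt_of_lt_of_le hr1 hle
  exact (one_lt_div hfy).1 this
end

section
/- Let n ≥ 1 and let f₀, f₁, …, f_n be nonnegative reals with no internal zeros (i.e., if f_N = 0 then either f_{N+i} = 0 for all applicable i, or f_{N−i} = 0 for all 0 ≤ i ≤ N), satisfying f_k² ≥ f_{k−1} f_{k+1} for k = 1,…,n−1. Let A₀, A₁, …, A_{⌊n/2⌋} be reals with A_{⌊n/2⌋} > 0, Σ_{k=0}^{⌊n/2⌋} A_k ≥ 0, and such that the sequence has at most one change of sign (pattern: minuses, then zeros, then pluses, where minuses and zeros may be missing). Then Σ_{k=0}^{⌊n/2⌋} f_k f_{n−k} A_k ≥ 0. -/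
private lemma sign_nonneg_of_nonneg {x : ℝ} (h : 0 ≤ x) : 0 ≤ Real.sign x := by
  rcases eq_or_lt_of_le h with h' | h'
  · simp [← h', Real.sign_zero]
  · rw [Real.sign_of_pos h']; norm_num

private lemma nonneg_of_sign_nonneg {x : ℝ} (h : 0 ≤ Real.sign x) : 0 ≤ x := by
  by_contra hx
  push_neg at hx
  rw [Real.sign_of_neg hx] at h
  norm_num at h

private lemma ratio_lemma (n : ℕ) (f : ℕ → ℝ)
    (hfnonneg : ∀ k ≤ n, 0 ≤ f k)
    (hnozeros : ∀ N ≤ n, f N = 0 →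
      (∀ i : ℕ, N + i ≤ n → f (N + i) = 0) ∨ (∀ i ≤ N, f (N - i) = 0))
    (hlogconc : ∀ k, 1 ≤ k → k + 1 ≤ n → f (k - 1) * f (k + 1) ≤ f k ^ 2) :
    ∀ k j, k ≤ j → j + 1 ≤ n → f k * f (j + 1) ≤ f (k + 1) * f j := by
  intro k j hkj
  induction j, hkj using Nat.le_induction with
  | base => intro _; rw [mul_comm]
  | succ j hkj IH =>
    intro hj2
    have hj1 : j + 1 ≤ n := by omega
    by_cases h1 : f (j + 1) = 0
    · rcases hnozeros (j + 1) hj1 h1 with hfwd | hbwd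
      · have : f (j + 2) = 0 := by
          have := hfwd 1 (by omega); simpa using this
        rw [this, h1]; simp
      · have : f k = 0 := by
          have := hbwd (j + 1 - k) (by omega)
          rwa [show j + 1 - (j + 1 - k) = k by omega] at this
        rw [this, h1]; simp
    · have h1' : 0 < f (j + 1) := lt_of_le_of_ne (hfnonneg _ hj1) (Ne.symm h1)
      by_cases h0 : f j = 0
      · rcases hnozeros j (by omega) h0 with hfwd | hbwd
        · exact absurd (by simpa using hfwd 1 (by omega)) h1
        · have hk : f k = 0 := by
            have := hbwd (j - k) (by omega)
            rwa [show j - (j - k) = k by omega] at this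
          rw [hk, zero_mul]
          exact mul_nonneg (hfnonneg _ (by omega)) h1'.le
      · have h0' : 0 < f j := lt_of_le_of_ne (hfnonneg _ (by omega)) (Ne.symm h0)
        have hIH := IH hj1
        have hlc := hlogconc (j + 1) (by omega) hj2
        rw [show j + 1 - 1 = j by omega] at hlc
        have hknn : 0 ≤ f k := hfnonneg k (by omega)
        have hk1nn : 0 ≤ f (k + 1) := hfnonneg (k + 1) (by omega)
        nlinarith [mul_le_mul hIH hlc (mul_nonneg h0'.le (hfnonneg _ hj2))
          (mul_nonneg hk1nn h0'.le)]

theorem stmt_6 (n : ℕ) (hn : 1 ≤ n) (f A : ℕ → ℝ)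
    (hfnonneg : ∀ k ≤ n, 0 ≤ f k)
    (hnozeros : ∀ N ≤ n, f N = 0 →
      (∀ i : ℕ, N + i ≤ n → f (N + i) = 0) ∨ (∀ i ≤ N, f (N - i) = 0))
    (hlogconc : ∀ k, 1 ≤ k → k + 1 ≤ n → f (k - 1) * f (k + 1) ≤ f k ^ 2)
    (hAlast : 0 < A (n / 2))
    (hAsum : 0 ≤ ∑ k ∈ Finset.range (n / 2 + 1), A k)
    (hsign : ∀ j k, j ≤ k → k ≤ n / 2 → Real.sign (A j) ≤ Real.sign (A k)) :
    0 ≤ ∑ k ∈ Finset.range (n / 2 + 1), f k * f (n - k) * A k := by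
  -- g k = f k * f (n - k) is monotone on [0, n/2]
  have hg : ∀ a b, a ≤ b → b ≤ n / 2 → f a * f (n - a) ≤ f b * f (n - b) := by
    intro a b hab
    induction b, hab using Nat.le_induction with
    | base => intro _; exact le_rfl
    | succ b hab IH =>
      intro hb1
      have hb : b ≤ n / 2 := by omega
      refine (IH hb).trans ?_
      have key := ratio_lemma n f hfnonneg hnozeros hlogconc b (n - b - 1)
        (by omega) (by omega)
      rw [show n - b - 1 + 1 = n - b by omega, show n - b - 1 = n - (b + 1) by omega] at key
      exact key
  -- exists index with A nonneg
  have hex : ∃ m, m ≤ n / 2 ∧ 0 ≤ A m := ⟨n / 2, le_refl _, hAlast.le⟩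
  classical
  set m := Nat.find hex with hm
  obtain ⟨hmle, hAm⟩ := Nat.find_spec hex
  have hgm_nonneg : 0 ≤ f m * f (n - m) :=
    mul_nonneg (hfnonneg m (by omega)) (hfnonneg (n - m) (by omega))
  have key : ∀ k ∈ Finset.range (n / 2 + 1),
      f m * f (n - m) * A k ≤ f k * f (n - k) * A k := by
    intro k hk
    rw [Finset.mem_range] at hk
    have hkle : k ≤ n / 2 := by omega
    rcases lt_or_ge k m with hkm | hkm
    · -- A k < 0
      have hAk : A k < 0 := by
        by_contra h
        push_neg at h
        have : m ≤ k := Nat.find_le ⟨hkle, h⟩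
        omega
      exact mul_le_mul_of_nonpos_right (hg k m hkm.le hmle) hAk.le
    · -- A k ≥ 0
      have hAk : 0 ≤ A k :=
        nonneg_of_sign_nonneg ((sign_nonneg_of_nonneg hAm).trans (hsign m k hkm hkle))
      exact mul_le_mul_of_nonneg_right (hg m k hkm hkle) hAk
  calc (0 : ℝ) ≤ f m * f (n - m) * ∑ k ∈ Finset.range (n / 2 + 1), A k :=
        mul_nonneg hgm_nonneg hAsum
    _ = ∑ k ∈ Finset.range (n / 2 + 1), f m * f (n - m) * A k := by
        rw [Finset.mul_sum]
    _ ≤ _ := Finset.sum_le_sum key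
end

section
/- The Kummer confluent hypergeometric function satisfies the identity ₁F₁(a+μ;c+μ;x)·₁F₁(a+1;c+1;x) − ₁F₁(a+μ+1;c+μ+1;x)·₁F₁(a;c;x) = [(c−a)x / (c(c+1)(c+μ)(c+μ+1))] · [(c+μ)(c+μ+1)·₁F₁(a+1;c+2;x)·₁F₁(a+μ+1;c+μ+1;x) − c(c+1)·₁F₁(a+1;c+1;x)·₁F₁(a+μ+1;c+μ+2;x)], as an identity of formal power series (or of entire functions of x), for parameters such that no denominator parameter is a nonpositive real making the Pochhammer symbols vanish. -/
set_option maxHeartbeats 800000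

noncomputable def risingFactorial (a : ℝ) (n : ℕ) : ℝ :=
  ∏ i ∈ Finset.range n, (a + i)

noncomputable def kummer (a c x : ℝ) : ℝ :=
  ∑' n : ℕ, risingFactorial a n * x ^ n / (risingFactorial c n * n.factorial)

lemma rF_succ (a : ℝ) (n : ℕ) : risingFactorial a (n+1) = risingFactorial a n * (a + n) := by
  simp [risingFactorial, Finset.prod_range_succ]

lemma rF_succ' (a : ℝ) (n : ℕ) : risingFactorial a (n+1) = risingFactorial (a+1) n * a := by
  rw [risingFactorial, Finset.prod_range_succ']
  simp only [Nat.cast_zero, add_zero]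
  congr 1
  apply Finset.prod_congr rfl
  intro i _
  push_cast
  ring

lemma rF_pos {c : ℝ} (hc : 0 < c) (n : ℕ) : 0 < risingFactorial c n := by
  apply Finset.prod_pos; intro i _; positivity

lemma rF_bound {a c : ℝ} (hc : 0 < c) (n : ℕ) :
    |risingFactorial a n| ≤ (max 1 (|a|/c))^n * risingFactorial c n := by
  induction n with
  | zero => simp [risingFactorial]
  | succ n ih =>
      rw [rF_succ, rF_succ, abs_mul]
      have hM1 : (1:ℝ) ≤ max 1 (|a|/c) := le_max_left _ _
      have hMa : |a| ≤ max 1 (|a|/c) * c := by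
        have h := mul_le_mul_of_nonneg_right (le_max_right 1 (|a|/c)) hc.le
        rwa [div_mul_cancel₀ _ hc.ne'] at h
      have hn : (0:ℝ) ≤ (n:ℝ) := Nat.cast_nonneg n
      have h1 : |a + (n:ℝ)| ≤ max 1 (|a|/c) * (c + n) := by
        have habs : |a + (n:ℝ)| ≤ |a| + n := by
          refine (abs_add_le _ _).trans ?_
          simp [abs_of_nonneg hn]
        nlinarith
      have hMp : (0:ℝ) < max 1 (|a|/c) := lt_of_lt_of_le one_pos hM1
      have hcn : (0:ℝ) < c + n := by positivity
      have hrp := rF_pos hc n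
      calc |risingFactorial a n| * |a + (n:ℝ)|
            ≤ ((max 1 (|a|/c))^n * risingFactorial c n) * (max 1 (|a|/c) * (c + n)) := by
              apply mul_le_mul ih h1 (abs_nonneg _); positivity
        _ = (max 1 (|a|/c))^(n+1) * (risingFactorial c n * (c + n)) := by ring

lemma kummer_summable (a : ℝ) {c : ℝ} (x : ℝ) (hc : 0 < c) :
    Summable (fun n : ℕ => risingFactorial a n * x ^ n / (risingFactorial c n * n.factorial)) := by
  set M := max 1 (|a|/c) with hM
  have hM0 : 0 < M := lt_of_lt_of_le one_pos (le_max_left _ _)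
  apply Summable.of_abs
  refine Summable.of_nonneg_of_le (fun n => abs_nonneg _) (fun n => ?_)
    (Real.summable_pow_div_factorial (M * |x|))
  have hp := rF_pos hc n
  have hf : (0:ℝ) < (n.factorial : ℝ) := by positivity
  rw [abs_div, abs_mul, abs_of_pos (by positivity : (0:ℝ) < risingFactorial c n * n.factorial)]
  rw [div_le_div_iff₀ (by positivity) hf, abs_pow, mul_pow]
  have h1 : |risingFactorial a n| ≤ M^n * risingFactorial c n := rF_bound hc n
  have hx : (0:ℝ) ≤ |x|^n := by positivity
  calc |risingFactorial a n| * |x|^n * (n.factorial : ℝ)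
        ≤ (M^n * risingFactorial c n) * |x|^n * n.factorial := by gcongr
    _ = M^n * |x|^n * (risingFactorial c n * n.factorial) := by ring

lemma contiguous (a : ℝ) {c : ℝ} (x : ℝ) (hc : 0 < c) :
    kummer (a+1) (c+1) x - kummer a c x = (c-a)*x/(c*(c+1)) * kummer (a+1) (c+2) x := by
  have hc1 : (0:ℝ) < c + 1 := by linarith
  have hc2 : (0:ℝ) < c + 2 := by linarith
  have h1 := kummer_summable (a+1) x hc1
  have h2 := kummer_summable a x hc
  have hs := h1.sub h2
  unfold kummer
  rw [← Summable.tsum_sub h1 h2, Summable.tsum_eq_zero_add hs, ← tsum_mul_left]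
  have h0 : risingFactorial (a+1) 0 * x ^ 0 / (risingFactorial (c+1) 0 * (Nat.factorial 0 : ℝ)) -
      risingFactorial a 0 * x ^ 0 / (risingFactorial c 0 * (Nat.factorial 0 : ℝ)) = 0 := by
    simp [risingFactorial]
  rw [h0, zero_add]
  apply tsum_congr
  intro n
  have hP1 : (0:ℝ) < risingFactorial (c+1) n := rF_pos hc1 n
  have hP2 : (0:ℝ) < risingFactorial (c+2) n := rF_pos hc2 n
  have hA := rF_succ (c+1) n
  have hB := rF_succ' (c+1) n
  have hrel : risingFactorial (c+1) n * (c+1+n) = risingFactorial (c+2) n * (c+1) := by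
    rw [← hA, hB]; ring_nf
  have e1 : risingFactorial (a+1) (n+1) = risingFactorial (a+1) n * (a+1+n) := rF_succ _ n
  have e2 : risingFactorial a (n+1) = risingFactorial (a+1) n * a := rF_succ' a n
  have e3 : risingFactorial (c+1) (n+1) = risingFactorial (c+2) n * (c+1) := by
    rw [rF_succ']; ring_nf
  have e4 : risingFactorial c (n+1) = risingFactorial (c+1) n * c := rF_succ' c n
  have ef : ((n+1).factorial : ℝ) = (n+1) * n.factorial := by
    rw [Nat.factorial_succ]; push_cast; ring
  rw [e1, e2, e3, e4, ef]
  have hf : (0:ℝ) < (n.factorial : ℝ) := by positivity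
  have hn1 : (0:ℝ) < (n:ℝ) + 1 := by positivity
  have hcn : (0:ℝ) < c + 1 + n := by positivity
  have hP1' : risingFactorial (c+1) n = risingFactorial (c+2) n * (c+1) / (c+1+n) := by
    field_simp
    linarith [hrel]
  rw [hP1']
  field_simp
  ring

theorem stmt_7 (a c μ x : ℝ) (hc : 0 < c) (hcμ : 0 < c + μ) :
    kummer (a + μ) (c + μ) x * kummer (a + 1) (c + 1) x -
        kummer (a + μ + 1) (c + μ + 1) x * kummer a c x =
      (c - a) * x / (c * (c + 1) * (c + μ) * (c + μ + 1)) *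
        ((c + μ) * (c + μ + 1) * kummer (a + 1) (c + 2) x * kummer (a + μ + 1) (c + μ + 1) x -
          c * (c + 1) * kummer (a + 1) (c + 1) x * kummer (a + μ + 1) (c + μ + 2) x) := by
  have h1 := contiguous a x hc
  have h2 := contiguous (a + μ) x hcμ
  have e1 : kummer a c x =
      kummer (a+1) (c+1) x - (c-a)*x/(c*(c+1)) * kummer (a+1) (c+2) x := by linarith
  have e2 : kummer (a+μ) (c+μ) x =
      kummer (a+μ+1) (c+μ+1) x - ((c+μ)-(a+μ))*x/((c+μ)*(c+μ+1)) * kummer (a+μ+1) (c+μ+2) x := by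
    linarith
  rw [e1, e2]
  have hc0 : c ≠ 0 := hc.ne'
  have hc1 : c + 1 ≠ 0 := by positivity
  have hm0 : c + μ ≠ 0 := hcμ.ne'
  have hm1 : c + μ + 1 ≠ 0 := by positivity
  field_simp
  ring
end

section
/- Let α₁, α₂, β₁, β₂ ≥ 0 with β₁β₂ > 0 and suppose β₁β₂/(α₁α₂) ≥ (β₁+β₂)/(α₁+α₂) ≥ 1 (with α₁α₂ > 0). Then the function x ↦ (x+α₁)(x+α₂)/((x+β₁)(x+β₂)) is increasing on [0,∞), and consequently bounded above by 1 on [0,∞). -/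
theorem stmt_12 (α₁ α₂ β₁ β₂ : ℝ) (hα : 0 < α₁ * α₂) (hβ : 0 < β₁ * β₂)
    (hα₁ : 0 ≤ α₁) (hα₂ : 0 ≤ α₂) (hβ₁ : 0 ≤ β₁) (hβ₂ : 0 ≤ β₂)
    (h1 : (β₁ + β₂) / (α₁ + α₂) ≤ β₁ * β₂ / (α₁ * α₂))
    (h2 : 1 ≤ (β₁ + β₂) / (α₁ + α₂)) :
    MonotoneOn (fun x : ℝ => (x + α₁) * (x + α₂) / ((x + β₁) * (x + β₂))) (Set.Ici 0) ∧
      ∀ x : ℝ, 0 ≤ x → (x + α₁) * (x + α₂) / ((x + β₁) * (x + β₂)) ≤ 1 := by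
  have ha1 : 0 < α₁ := by nlinarith
  have ha2 : 0 < α₂ := by nlinarith
  have hb1 : 0 < β₁ := by nlinarith
  have hb2 : 0 < β₂ := by nlinarith
  have hs : 0 < α₁ + α₂ := by linarith
  -- s ≤ S
  have hS : α₁ + α₂ ≤ β₁ + β₂ := by
    have := (one_le_div hs).mp h2
    linarith
  -- s*P - p*S ≥ 0 :  (β₁+β₂)*(α₁*α₂) ≤ (β₁*β₂)*(α₁+α₂)
  have hkey : (β₁ + β₂) * (α₁ * α₂) ≤ β₁ * β₂ * (α₁ + α₂) :=
    (div_le_div_iff₀ hs hα).mp h1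
  -- p ≤ P
  have hP : α₁ * α₂ ≤ β₁ * β₂ := by nlinarith
  have hdenom : ∀ x : ℝ, 0 ≤ x → 0 < (x + β₁) * (x + β₂) := by
    intro x hx
    positivity
  constructor
  · intro a ha b hb hab
    simp only [Set.mem_Ici] at ha hb
    simp only
    rw [div_le_div_iff₀ (hdenom a ha) (hdenom b hb)]
    have h3 : 0 ≤ (b - a) * ((β₁ + β₂ - (α₁ + α₂)) * (a * b)
        + (β₁ * β₂ - α₁ * α₂) * (a + b)
        + ((α₁ + α₂) * (β₁ * β₂) - (α₁ * α₂) * (β₁ + β₂))) := by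
      apply mul_nonneg (by linarith)
      have : 0 ≤ (β₁ + β₂ - (α₁ + α₂)) * (a * b) := by
        apply mul_nonneg (by linarith) (mul_nonneg ha hb)
      nlinarith
    nlinarith [h3]
  · intro x hx
    rw [div_le_one (hdenom x hx)]
    nlinarith
end

section
/- Let a > 0, c > 0, and μ, ν ≥ 0. Then Γ(a)Γ(a+μ+ν)/(Γ(c)Γ(c+μ+ν)) ≥ Γ(a+μ)Γ(a+ν)/(Γ(c+μ)Γ(c+ν)) whenever c ≥ a, with strict inequality if c > a and μ, ν > 0. -/
open Filter Finset

private lemma key_factor (a c μ ν j : ℝ) (ha : 0 < a) (hc : 0 < c) (hμ : 0 ≤ μ)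
    (hν : 0 ≤ ν) (hca : a ≤ c) (hj : 0 ≤ j) :
    (a + j) * (a + μ + ν + j) * ((c + μ + j) * (c + ν + j)) ≤
      (a + μ + j) * (a + ν + j) * ((c + j) * (c + μ + ν + j)) := by
  have hid : (a + μ + j) * (a + ν + j) * ((c + j) * (c + μ + ν + j)) -
      (a + j) * (a + μ + ν + j) * ((c + μ + j) * (c + ν + j)) =
      μ * ν * (c - a) * (a + c + 2 * j + μ + ν) := by ring
  nlinarith [mul_nonneg (mul_nonneg (mul_nonneg hμ hν) (sub_nonneg.2 hca))
    (by linarith : (0:ℝ) ≤ a + c + 2 * j + μ + ν)]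

private lemma main_le (a c μ ν : ℝ) (ha : 0 < a) (hc : 0 < c) (hμ : 0 ≤ μ) (hν : 0 ≤ ν)
    (hca : a ≤ c) :
    Real.Gamma (a + μ) * Real.Gamma (a + ν) * (Real.Gamma c * Real.Gamma (c + μ + ν)) ≤
      Real.Gamma a * Real.Gamma (a + μ + ν) * (Real.Gamma (c + μ) * Real.Gamma (c + ν)) := by
  have hL : Tendsto (fun n => Real.GammaSeq (a + μ) n * Real.GammaSeq (a + ν) n *
      (Real.GammaSeq c n * Real.GammaSeq (c + μ + ν) n)) atTop
      (nhds (Real.Gamma (a + μ) * Real.Gamma (a + ν) *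
        (Real.Gamma c * Real.Gamma (c + μ + ν)))) :=
    (((Real.GammaSeq_tendsto_Gamma (a + μ)).mul (Real.GammaSeq_tendsto_Gamma (a + ν))).mul
      ((Real.GammaSeq_tendsto_Gamma c).mul (Real.GammaSeq_tendsto_Gamma (c + μ + ν))))
  have hR : Tendsto (fun n => Real.GammaSeq a n * Real.GammaSeq (a + μ + ν) n *
      (Real.GammaSeq (c + μ) n * Real.GammaSeq (c + ν) n)) atTop
      (nhds (Real.Gamma a * Real.Gamma (a + μ + ν) *
        (Real.Gamma (c + μ) * Real.Gamma (c + ν)))) :=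
    (((Real.GammaSeq_tendsto_Gamma a).mul (Real.GammaSeq_tendsto_Gamma (a + μ + ν))).mul
      ((Real.GammaSeq_tendsto_Gamma (c + μ)).mul (Real.GammaSeq_tendsto_Gamma (c + ν))))
  refine le_of_tendsto_of_tendsto hL hR ?_
  filter_upwards [eventually_ge_atTop 1] with n hn
  have hnpos : (0:ℝ) < (n : ℝ) := by exact_mod_cast hn
  -- notation
  set P : ℝ → ℝ := fun s => ∏ j ∈ Finset.range (n + 1), (s + j) with hP
  have Ppos : ∀ s : ℝ, 0 < s → 0 < P s := by
    intro s hs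
    refine Finset.prod_pos fun j _ => ?_
    have : (0:ℝ) ≤ (j : ℝ) := Nat.cast_nonneg j
    linarith
  have hGS : ∀ s : ℝ, Real.GammaSeq s n = (n : ℝ) ^ s * n.factorial / P s := fun s => rfl
  rw [hGS, hGS, hGS, hGS, hGS, hGS, hGS, hGS]
  rw [div_mul_div_comm, div_mul_div_comm, div_mul_div_comm, div_mul_div_comm,
    div_mul_div_comm, div_mul_div_comm]
  -- numerators are equal
  have hnum : (n:ℝ) ^ (a + μ) * n.factorial * ((n:ℝ) ^ (a + ν) * n.factorial) *
      ((n:ℝ) ^ c * n.factorial * ((n:ℝ) ^ (c + μ + ν) * n.factorial)) =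
      (n:ℝ) ^ a * n.factorial * ((n:ℝ) ^ (a + μ + ν) * n.factorial) *
      ((n:ℝ) ^ (c + μ) * n.factorial * ((n:ℝ) ^ (c + ν) * n.factorial)) := by
    have e1 : (n:ℝ) ^ (a + μ) * (n:ℝ) ^ (a + ν) = (n:ℝ) ^ a * (n:ℝ) ^ (a + μ + ν) := by
      rw [← Real.rpow_add hnpos, ← Real.rpow_add hnpos]; congr 1; ring
    have e2 : (n:ℝ) ^ c * (n:ℝ) ^ (c + μ + ν) = (n:ℝ) ^ (c + μ) * (n:ℝ) ^ (c + ν) := by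
      rw [← Real.rpow_add hnpos, ← Real.rpow_add hnpos]; congr 1; ring
    calc (n:ℝ) ^ (a + μ) * n.factorial * ((n:ℝ) ^ (a + ν) * n.factorial) *
        ((n:ℝ) ^ c * n.factorial * ((n:ℝ) ^ (c + μ + ν) * n.factorial))
        = ((n:ℝ) ^ (a + μ) * (n:ℝ) ^ (a + ν)) * ((n:ℝ) ^ c * (n:ℝ) ^ (c + μ + ν)) *
          ((n.factorial : ℝ)) ^ 4 := by ring
      _ = ((n:ℝ) ^ a * (n:ℝ) ^ (a + μ + ν)) * ((n:ℝ) ^ (c + μ) * (n:ℝ) ^ (c + ν)) *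
          ((n.factorial : ℝ)) ^ 4 := by rw [e1, e2]
      _ = (n:ℝ) ^ a * n.factorial * ((n:ℝ) ^ (a + μ + ν) * n.factorial) *
          ((n:ℝ) ^ (c + μ) * n.factorial * ((n:ℝ) ^ (c + ν) * n.factorial)) := by ring
  rw [hnum]
  -- compare denominators
  have hden : P a * P (a + μ + ν) * (P (c + μ) * P (c + ν)) ≤
      P (a + μ) * P (a + ν) * (P c * P (c + μ + ν)) := by
    simp only [hP]
    rw [← Finset.prod_mul_distrib, ← Finset.prod_mul_distrib, ← Finset.prod_mul_distrib,
      ← Finset.prod_mul_distrib, ← Finset.prod_mul_distrib, ← Finset.prod_mul_distrib]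
    refine Finset.prod_le_prod (fun j _ => ?_) (fun j _ => ?_)
    · have hj : (0:ℝ) ≤ (j : ℝ) := Nat.cast_nonneg j
      positivity
    · exact key_factor a c μ ν j ha hc hμ hν hca (Nat.cast_nonneg j)
  have hnumnn : (0:ℝ) ≤ (n:ℝ) ^ a * n.factorial * ((n:ℝ) ^ (a + μ + ν) * n.factorial) *
      ((n:ℝ) ^ (c + μ) * n.factorial * ((n:ℝ) ^ (c + ν) * n.factorial)) := by positivity
  have hd2 : 0 < P a * P (a + μ + ν) * (P (c + μ) * P (c + ν)) := by
    have := Ppos a ha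
    have := Ppos (a + μ + ν) (by linarith)
    have := Ppos (c + μ) (by linarith)
    have := Ppos (c + ν) (by linarith)
    positivity
  exact div_le_div_of_nonneg_left hnumnn hd2 hden

theorem stmt_13 (a c μ ν : ℝ) (ha : 0 < a) (hc : 0 < c) (hμ : 0 ≤ μ) (hν : 0 ≤ ν)
    (hca : a ≤ c) :
    Real.Gamma (a + μ) * Real.Gamma (a + ν) / (Real.Gamma (c + μ) * Real.Gamma (c + ν)) ≤
        Real.Gamma a * Real.Gamma (a + μ + ν) / (Real.Gamma c * Real.Gamma (c + μ + ν)) ∧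
      (a < c → 0 < μ → 0 < ν →
        Real.Gamma (a + μ) * Real.Gamma (a + ν) / (Real.Gamma (c + μ) * Real.Gamma (c + ν)) <
          Real.Gamma a * Real.Gamma (a + μ + ν) / (Real.Gamma c * Real.Gamma (c + μ + ν))) := by
  have Ga := Real.Gamma_pos_of_pos ha
  have Gc := Real.Gamma_pos_of_pos hc
  have Gaμ := Real.Gamma_pos_of_pos (show (0:ℝ) < a + μ by linarith)
  have Gaν := Real.Gamma_pos_of_pos (show (0:ℝ) < a + ν by linarith)
  have Gaμν := Real.Gamma_pos_of_pos (show (0:ℝ) < a + μ + ν by linarith)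
  have Gcμ := Real.Gamma_pos_of_pos (show (0:ℝ) < c + μ by linarith)
  have Gcν := Real.Gamma_pos_of_pos (show (0:ℝ) < c + ν by linarith)
  have Gcμν := Real.Gamma_pos_of_pos (show (0:ℝ) < c + μ + ν by linarith)
  constructor
  · rw [div_le_div_iff₀ (by positivity) (by positivity)]
    exact main_le a c μ ν ha hc hμ hν hca
  · intro hltac hμ0 hν0
    rw [div_lt_div_iff₀ (by positivity) (by positivity)]
    have H := main_le (a + 1) (c + 1) μ ν (by linarith) (by linarith) hμ hν (by linarith)
    rw [show a + 1 + μ + ν = (a + μ + ν) + 1 by ring,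
      show c + 1 + μ + ν = (c + μ + ν) + 1 by ring,
      show a + 1 + μ = (a + μ) + 1 by ring, show a + 1 + ν = (a + ν) + 1 by ring,
      show c + 1 + μ = (c + μ) + 1 by ring, show c + 1 + ν = (c + ν) + 1 by ring] at H
    rw [Real.Gamma_add_one (by linarith : a + μ ≠ 0),
      Real.Gamma_add_one (by linarith : a + ν ≠ 0),
      Real.Gamma_add_one (by linarith : a + μ + ν ≠ 0),
      Real.Gamma_add_one (by linarith : a ≠ 0),
      Real.Gamma_add_one (by linarith : c ≠ 0),
      Real.Gamma_add_one (by linarith : c + μ ≠ 0),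
      Real.Gamma_add_one (by linarith : c + ν ≠ 0),
      Real.Gamma_add_one (by linarith : c + μ + ν ≠ 0)] at H
    -- H : (a+μ)Γ(a+μ)·(a+ν)Γ(a+ν)·(cΓc·(c+μ+ν)Γ(c+μ+ν)) ≤ aΓa·(a+μ+ν)Γ(a+μ+ν)·((c+μ)Γ(c+μ)·(c+ν)Γ(c+ν))
    set X := Real.Gamma (a + μ) * Real.Gamma (a + ν) * (Real.Gamma c * Real.Gamma (c + μ + ν))
      with hX
    set Y := Real.Gamma a * Real.Gamma (a + μ + ν) *
      (Real.Gamma (c + μ) * Real.Gamma (c + ν)) with hY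
    have hH' : (a + μ) * (a + ν) * (c * (c + μ + ν)) * X ≤
        a * (a + μ + ν) * ((c + μ) * (c + ν)) * Y := by
      calc (a + μ) * (a + ν) * (c * (c + μ + ν)) * X
          = (a + μ) * Real.Gamma (a + μ) * ((a + ν) * Real.Gamma (a + ν)) *
            (c * Real.Gamma c * ((c + μ + ν) * Real.Gamma (c + μ + ν))) := by rw [hX]; ring
        _ ≤ a * Real.Gamma a * ((a + μ + ν) * Real.Gamma (a + μ + ν)) *
            ((c + μ) * Real.Gamma (c + μ) * ((c + ν) * Real.Gamma (c + ν))) := H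
        _ = a * (a + μ + ν) * ((c + μ) * (c + ν)) * Y := by rw [hY]; ring
    have hPQ : a * (a + μ + ν) * ((c + μ) * (c + ν)) <
        (a + μ) * (a + ν) * (c * (c + μ + ν)) := by
      have hid : (a + μ) * (a + ν) * (c * (c + μ + ν)) -
          a * (a + μ + ν) * ((c + μ) * (c + ν)) = μ * ν * (c - a) * (a + c + μ + ν) := by ring
      nlinarith [mul_pos (mul_pos (mul_pos hμ0 hν0) (sub_pos.2 hltac))
        (by linarith : (0:ℝ) < a + c + μ + ν)]
    have hXpos : 0 < X := by rw [hX]; positivity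
    have hQpos : 0 < a * (a + μ + ν) * ((c + μ) * (c + ν)) := by positivity
    have : a * (a + μ + ν) * ((c + μ) * (c + ν)) * X <
        a * (a + μ + ν) * ((c + μ) * (c + ν)) * Y :=
      lt_of_lt_of_le (by nlinarith) hH'
    have hXY : X < Y := lt_of_mul_lt_mul_left this hQpos.le
    calc Real.Gamma (a + μ) * Real.Gamma (a + ν) * (Real.Gamma c * Real.Gamma (c + μ + ν))
        = X := rfl
      _ < Y := hXY
      _ = Real.Gamma a * Real.Gamma (a + μ + ν) * (Real.Gamma (c + μ) * Real.Gamma (c + ν)) := rfl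
end

section
/- Let a ≥ c > 0 and μ, ν ≥ 0 with μ, ν not both zero, and let m ≥ 1 be an integer and 0 ≤ k ≤ m/2. Then (a)_k (a+μ+ν)_{m−k}/((c)_k (c+μ+ν)_{m−k}) + (a)_{m−k}(a+μ+ν)_k/((c)_{m−k}(c+μ+ν)_k) ≥ (a+μ)_k (a+ν)_{m−k}/((c+μ)_k (c+ν)_{m−k}) + (a+μ)_{m−k}(a+ν)_k/((c+μ)_{m−k}(c+ν)_k), with strict inequality when a > c and μ,ν > 0. -/
private lemma key_le (x y p q : ℝ) (hy : 0 < y) (hxy : y ≤ x) (hp : 0 ≤ p) (hq : 0 ≤ q) :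
    (x + p) * (x + q) * (y * (y + (p + q))) ≤ x * (x + (p + q)) * ((y + p) * (y + q)) := by
  nlinarith [mul_nonneg (mul_nonneg (mul_nonneg hp hq) (sub_nonneg.2 hxy))
    (by linarith : (0:ℝ) ≤ x + y + p + q)]

private lemma key_lt (x y p q : ℝ) (hy : 0 < y) (hxy : y < x) (hp : 0 < p) (hq : 0 < q) :
    (x + p) * (x + q) * (y * (y + (p + q))) < x * (x + (p + q)) * ((y + p) * (y + q)) := by
  nlinarith [mul_pos (mul_pos (mul_pos hp hq) (sub_pos.2 hxy))
    (by linarith : (0:ℝ) < x + y + p + q)]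

private lemma sum_le (x y M N : ℝ) (hx : x ≤ M) (hy : y ≤ M) (hM : 0 < M)
    (h : x * y ≤ M * N) : x + y ≤ M + N := by
  nlinarith [mul_nonneg (sub_nonneg.2 hx) (sub_nonneg.2 hy)]

private lemma sum_lt (x y M N : ℝ) (hx : x ≤ M) (hy : y ≤ M) (hM : 0 < M)
    (h : x * y < M * N) : x + y < M + N := by
  nlinarith [mul_nonneg (sub_nonneg.2 hx) (sub_nonneg.2 hy)]

theorem stmt_14 (a c μ ν : ℝ) (hac : c ≤ a) (hc : 0 < c) (hμ : 0 ≤ μ) (hν : 0 ≤ ν)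
    (hμν : ¬(μ = 0 ∧ ν = 0)) (m k : ℕ) (hm : 1 ≤ m) (hk : 2 * k ≤ m) :
    risingFactorial (a + μ) k * risingFactorial (a + ν) (m - k) /
          (risingFactorial (c + μ) k * risingFactorial (c + ν) (m - k)) +
        risingFactorial (a + μ) (m - k) * risingFactorial (a + ν) k /
          (risingFactorial (c + μ) (m - k) * risingFactorial (c + ν) k) ≤
      risingFactorial a k * risingFactorial (a + μ + ν) (m - k) /
          (risingFactorial c k * risingFactorial (c + μ + ν) (m - k)) +
        risingFactorial a (m - k) * risingFactorial (a + μ + ν) k /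
          (risingFactorial c (m - k) * risingFactorial (c + μ + ν) k) ∧
      (c < a → 0 < μ → 0 < ν →
        risingFactorial (a + μ) k * risingFactorial (a + ν) (m - k) /
              (risingFactorial (c + μ) k * risingFactorial (c + ν) (m - k)) +
            risingFactorial (a + μ) (m - k) * risingFactorial (a + ν) k /
              (risingFactorial (c + μ) (m - k) * risingFactorial (c + ν) k) <
          risingFactorial a k * risingFactorial (a + μ + ν) (m - k) /
              (risingFactorial c k * risingFactorial (c + μ + ν) (m - k)) +
            risingFactorial a (m - k) * risingFactorial (a + μ + ν) k /
              (risingFactorial c (m - k) * risingFactorial (c + μ + ν) k)) := by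
  have hkm : k ≤ m - k := by omega
  have hs : 0 ≤ μ + ν := by linarith
  -- basic positivity
  have hA : ∀ t : ℝ, 0 ≤ t → ∀ i : ℕ, 0 < c + t + i := by
    intro t ht i
    have : (0:ℝ) ≤ i := Nat.cast_nonneg i
    linarith
  have hB : ∀ t : ℝ, 0 ≤ t → ∀ i : ℕ, 0 < a + t + i := by
    intro t ht i; have := hA t ht i; linarith
  -- termwise facts about g t i = (a+t+i)/(c+t+i)
  have gpos : ∀ t : ℝ, 0 ≤ t → ∀ i : ℕ, 0 < (a + t + i) / (c + t + i) :=
    fun t ht i => div_pos (hB t ht i) (hA t ht i)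
  have gle0 : ∀ t : ℝ, 0 ≤ t → ∀ i : ℕ, (a + t + i) / (c + t + i) ≤ (a + 0 + i) / (c + 0 + i) := by
    intro t ht i
    rw [div_le_div_iff₀ (hA t ht i) (hA 0 le_rfl i)]
    nlinarith [mul_nonneg ht (sub_nonneg.2 hac)]
  have gkey : ∀ i : ℕ, (a + μ + i) / (c + μ + i) * ((a + ν + i) / (c + ν + i)) ≤
      (a + 0 + i) / (c + 0 + i) * ((a + (μ + ν) + i) / (c + (μ + ν) + i)) := by
    intro i
    rw [div_mul_div_comm, div_mul_div_comm,
      div_le_div_iff₀ (by positivity) (mul_pos (hA 0 le_rfl i) (hA (μ+ν) hs i))]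
    nlinarith [key_le (a + i) (c + i) μ ν (by have := hA 0 le_rfl i; linarith) (by linarith) hμ hν]
  -- products
  set Q : ℝ → ℕ → ℝ := fun t n => ∏ i ∈ Finset.range n, (a + t + i) / (c + t + i) with hQdef
  set H : ℝ → ℝ := fun t => ∏ i ∈ Finset.Ico k (m - k), (a + t + i) / (c + t + i) with hHdef
  have Qpos : ∀ t : ℝ, 0 ≤ t → ∀ n : ℕ, 0 < Q t n := by
    intro t ht n
    exact Finset.prod_pos fun i _ => gpos t ht i
  have Hpos : ∀ t : ℝ, 0 ≤ t → 0 < H t := by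
    intro t ht
    exact Finset.prod_pos fun i _ => gpos t ht i
  have Qkey : ∀ n : ℕ, Q μ n * Q ν n ≤ Q 0 n * Q (μ + ν) n := by
    intro n
    simp only [hQdef, ← Finset.prod_mul_distrib]
    exact Finset.prod_le_prod (fun i _ => le_of_lt (mul_pos (gpos μ hμ i) (gpos ν hν i)))
      (fun i _ => gkey i)
  have Hle : ∀ t : ℝ, 0 ≤ t → H t ≤ H 0 := by
    intro t ht
    exact Finset.prod_le_prod (fun i _ => le_of_lt (gpos t ht i)) (fun i _ => gle0 t ht i)
  have Hkey : H μ * H ν ≤ H 0 * H (μ + ν) := by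
    simp only [hHdef, ← Finset.prod_mul_distrib]
    exact Finset.prod_le_prod (fun i _ => le_of_lt (mul_pos (gpos μ hμ i) (gpos ν hν i)))
      (fun i _ => gkey i)
  have Hsum : H μ + H ν ≤ H 0 + H (μ + ν) :=
    sum_le _ _ _ _ (Hle μ hμ) (Hle ν hν) (Hpos 0 le_rfl) Hkey
  -- rewriting the goal
  have quot : ∀ (t : ℝ) (n : ℕ),
      risingFactorial (a + t) n / risingFactorial (c + t) n = Q t n := by
    intro t n
    simp only [hQdef, risingFactorial, ← Finset.prod_div_distrib]
  have quot0 : ∀ n : ℕ, risingFactorial a n / risingFactorial c n = Q 0 n := by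
    intro n
    simp only [hQdef, risingFactorial, ← Finset.prod_div_distrib, add_zero]
  have quots : ∀ n : ℕ,
      risingFactorial (a + μ + ν) n / risingFactorial (c + μ + ν) n = Q (μ + ν) n := by
    intro n
    have h1 : a + μ + ν = a + (μ + ν) := by ring
    have h2 : c + μ + ν = c + (μ + ν) := by ring
    rw [h1, h2, quot]
  have split : ∀ t : ℝ, Q t (m - k) = Q t k * H t := by
    intro t
    simp only [hQdef, hHdef, Finset.range_eq_Ico]
    exact (Finset.prod_Ico_consecutive _ (Nat.zero_le k) hkm).symm
  have e1 : risingFactorial (a + μ) k * risingFactorial (a + ν) (m - k) /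
      (risingFactorial (c + μ) k * risingFactorial (c + ν) (m - k)) = Q μ k * Q ν k * H ν := by
    rw [mul_div_mul_comm, quot, quot, split]; ring
  have e2 : risingFactorial (a + μ) (m - k) * risingFactorial (a + ν) k /
      (risingFactorial (c + μ) (m - k) * risingFactorial (c + ν) k) = Q μ k * Q ν k * H μ := by
    rw [mul_div_mul_comm, quot, quot, split]; ring
  have e3 : risingFactorial a k * risingFactorial (a + μ + ν) (m - k) /
      (risingFactorial c k * risingFactorial (c + μ + ν) (m - k)) =
      Q 0 k * Q (μ + ν) k * H (μ + ν) := by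
    rw [mul_div_mul_comm, quot0, quots, split]; ring
  have e4 : risingFactorial a (m - k) * risingFactorial (a + μ + ν) k /
      (risingFactorial c (m - k) * risingFactorial (c + μ + ν) k) =
      Q 0 k * Q (μ + ν) k * H 0 := by
    rw [mul_div_mul_comm, quot0, quots, split]; ring
  rw [e1, e2, e3, e4]
  have hQQpos : 0 < Q μ k * Q ν k := mul_pos (Qpos μ hμ k) (Qpos ν hν k)
  have hHsumpos : 0 < H μ + H ν := by
    have := Hpos μ hμ; have := Hpos ν hν; linarith
  constructor
  · calc Q μ k * Q ν k * H ν + Q μ k * Q ν k * H μ = Q μ k * Q ν k * (H μ + H ν) := by ring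
      _ ≤ Q 0 k * Q (μ + ν) k * (H 0 + H (μ + ν)) :=
        mul_le_mul (Qkey k) Hsum (le_of_lt hHsumpos)
          (le_of_lt (mul_pos (Qpos 0 le_rfl k) (Qpos (μ + ν) hs k)))
      _ = Q 0 k * Q (μ + ν) k * H (μ + ν) + Q 0 k * Q (μ + ν) k * H 0 := by ring
  · intro hca hμ' hν'
    have gkey' : ∀ i : ℕ, (a + μ + i) / (c + μ + i) * ((a + ν + i) / (c + ν + i)) <
        (a + 0 + i) / (c + 0 + i) * ((a + (μ + ν) + i) / (c + (μ + ν) + i)) := by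
      intro i
      rw [div_mul_div_comm, div_mul_div_comm,
        div_lt_div_iff₀ (by positivity) (mul_pos (hA 0 le_rfl i) (hA (μ+ν) hs i))]
      nlinarith [key_lt (a + i) (c + i) μ ν (by have := hA 0 le_rfl i; linarith) (by linarith) hμ' hν']
    have main : Q μ k * Q ν k * (H μ + H ν) < Q 0 k * Q (μ + ν) k * (H 0 + H (μ + ν)) := by
      rcases Nat.eq_zero_or_pos k with hk0 | hk1
      · -- k = 0 : the Q factors are 1, strictness comes from H
        have hne : (Finset.Ico k (m - k)).Nonempty := by
          rw [Finset.nonempty_Ico]; omega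
        have Hkey' : H μ * H ν < H 0 * H (μ + ν) := by
          simp only [hHdef, ← Finset.prod_mul_distrib]
          exact Finset.prod_lt_prod_of_nonempty
            (fun i _ => mul_pos (gpos μ hμ i) (gpos ν hν i)) (fun i _ => gkey' i) hne
        have Hsum' : H μ + H ν < H 0 + H (μ + ν) :=
          sum_lt _ _ _ _ (Hle μ hμ) (Hle ν hν) (Hpos 0 le_rfl) Hkey'
        have hQ1 : Q μ k = 1 ∧ Q ν k = 1 ∧ Q 0 k = 1 ∧ Q (μ + ν) k = 1 := by
          subst hk0
          simp [hQdef]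
        rw [hQ1.1, hQ1.2.1, hQ1.2.2.1, hQ1.2.2.2]
        simpa using Hsum'
      · -- k ≥ 1 : strictness comes from the Q factors
        have Qkey' : Q μ k * Q ν k < Q 0 k * Q (μ + ν) k := by
          simp only [hQdef, ← Finset.prod_mul_distrib]
          exact Finset.prod_lt_prod_of_nonempty
            (fun i _ => mul_pos (gpos μ hμ i) (gpos ν hν i)) (fun i _ => gkey' i)
            (by rw [Finset.nonempty_range_iff]; omega)
        exact mul_lt_mul Qkey' Hsum hHsumpos
          (le_of_lt (mul_pos (Qpos 0 le_rfl k) (Qpos (μ + ν) hs k)))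
    calc Q μ k * Q ν k * H ν + Q μ k * Q ν k * H μ = Q μ k * Q ν k * (H μ + H ν) := by ring
      _ < Q 0 k * Q (μ + ν) k * (H 0 + H (μ + ν)) := main
      _ = Q 0 k * Q (μ + ν) k * H (μ + ν) + Q 0 k * Q (μ + ν) k * H 0 := by ring
end

section
/- Let c ≥ a > 0, μ, ν ≥ 0, and let g_n ≥ 0 for all n. Define g(μ;x) := Σ_{n≥0} g_n (Γ(a+n+μ)/Γ(c+n+μ)) x^n/n! as a formal power series. Then for every m ≥ 0, the m-th coefficient of g(μ;x)g(ν;x) − g(0;x)g(μ+ν;x) is nonpositive; equivalently Σ_{k=0}^{m} [g_k g_{m−k}/(k!(m−k)!)] · [Γ(a+ν+k)Γ(a+μ+m−k)/(Γ(c+ν+k)Γ(c+μ+m−k)) − Γ(a+k)Γ(a+ν+μ+m−k)/(Γ(c+k)Γ(c+ν+μ+m−k))] ≤ 0. -/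
open MeasureTheory Set Real

noncomputable def myBeta (w u : ℝ) : ℝ :=
  ∫ x in Set.Ioc (0:ℝ) 1, x ^ (u - 1) * (1 - x) ^ (w - 1)

lemma myBeta_eq {w u : ℝ} (hw : 0 < w) (hu : 0 < u) :
    Real.Gamma u * Real.Gamma w = Real.Gamma (u + w) * myBeta w u := by
  have h := Complex.Gamma_mul_Gamma_eq_betaIntegral (s := (u:ℂ)) (t := (w:ℂ))
      (by simpa using hu) (by simpa using hw)
  have hbeta : Complex.betaIntegral (u:ℂ) (w:ℂ) = ((myBeta w u : ℝ) : ℂ) := by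
    rw [Complex.betaIntegral]
    have : (∫ x in (0:ℝ)..1, (x:ℂ) ^ ((u:ℂ) - 1) * ((1:ℂ) - x) ^ ((w:ℂ) - 1))
        = ∫ x in (0:ℝ)..1, ((x ^ (u - 1) * (1 - x) ^ (w - 1) : ℝ) : ℂ) := by
      apply intervalIntegral.integral_congr
      intro x hx
      rw [Set.uIcc_of_le (by norm_num : (0:ℝ) ≤ 1)] at hx
      simp only []
      push_cast [Complex.ofReal_cpow hx.1, Complex.ofReal_cpow (by linarith [hx.2] : (0:ℝ) ≤ 1 - x)]
      ring_nf
      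
    rw [this, intervalIntegral.integral_ofReal]
    congr 1
    rw [intervalIntegral.integral_of_le (by norm_num : (0:ℝ) ≤ 1)]
    rfl
  rw [hbeta, ← Complex.ofReal_add, Complex.Gamma_ofReal, Complex.Gamma_ofReal,
    Complex.Gamma_ofReal, ← Complex.ofReal_mul, ← Complex.ofReal_mul] at h
  exact_mod_cast h

lemma myBeta_integrableOn {u w : ℝ} (hu : 0 < u) (hw : 0 < w) :
    IntegrableOn (fun x : ℝ => x ^ (u - 1) * (1 - x) ^ (w - 1)) (Ioc (0:ℝ) 1) := by
  have hC := Complex.betaIntegral_convergent (u := (u:ℂ)) (v := (w:ℂ))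
      (by simpa using hu) (by simpa using hw)
  rw [intervalIntegrable_iff_integrableOn_Ioc_of_le (by norm_num : (0:ℝ) ≤ 1)] at hC
  have hN := hC.norm
  unfold IntegrableOn at hN ⊢
  rw [← Measure.restrict_congr_set Ioo_ae_eq_Ioc] at hN ⊢
  refine hN.congr ?_
  filter_upwards [ae_restrict_mem measurableSet_Ioo] with x hx
  have hx0 : 0 < x := hx.1
  have hx1 : 0 < 1 - x := by linarith [hx.2]
  rw [norm_mul]
  rw [show ((u:ℂ) - 1) = ((u - 1 : ℝ) : ℂ) by push_cast; ring,
    show ((w:ℂ) - 1) = ((w - 1 : ℝ) : ℂ) by push_cast; ring,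
    show ((1:ℂ) - (x:ℂ)) = ((1 - x : ℝ) : ℂ) by push_cast; ring]
  rw [Complex.norm_cpow_eq_rpow_re_of_pos hx0, Complex.norm_cpow_eq_rpow_re_of_pos hx1]
  simp

lemma myBeta_mul_add_mul_le {w s t a b : ℝ} (hw : 0 < w) (hs : 0 < s) (ht : 0 < t)
    (ha : 0 < a) (hb : 0 < b) (hab : a + b = 1) :
    myBeta w (a * s + b * t) ≤ myBeta w s ^ a * myBeta w t ^ b := by
  have hBIoo : ∀ u : ℝ, myBeta w u = ∫ x in Ioo (0:ℝ) 1, x ^ (u - 1) * (1 - x) ^ (w - 1) :=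
    fun u => integral_Ioc_eq_integral_Ioo
  let f : ℝ → ℝ → ℝ → ℝ := fun e u x => x ^ (e * (u - 1)) * (1 - x) ^ (e * (w - 1))
  have e : Real.HolderConjugate (1 / a) (1 / b) := Real.holderConjugate_one_div ha hb hab
  have hab' : b = 1 - a := by linarith
  have hst : 0 < a * s + b * t := by positivity
  have posf : ∀ e u x : ℝ, x ∈ Ioo (0:ℝ) 1 → 0 ≤ f e u x := fun e u x hx =>
    mul_nonneg (rpow_nonneg hx.1.le _) (rpow_nonneg (by linarith [hx.2]) _)
  have posf' : ∀ e u : ℝ, ∀ᵐ x : ℝ ∂volume.restrict (Ioo 0 1), 0 ≤ f e u x := fun e u =>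
    (ae_restrict_iff' measurableSet_Ioo).mpr (ae_of_all _ (posf e u))
  have fpow : ∀ {e x : ℝ} (_ : 0 < e) (u : ℝ) (_ : x ∈ Ioo (0:ℝ) 1),
      x ^ (u - 1) * (1 - x) ^ (w - 1) = f e u x ^ (1 / e) := by
    intro e x he u hx
    dsimp only [f]
    rw [mul_rpow (rpow_nonneg hx.1.le _) (rpow_nonneg (by linarith [hx.2]) _),
      ← rpow_mul hx.1.le, ← rpow_mul (by linarith [hx.2] : (0:ℝ) ≤ 1 - x)]
    congr 2 <;> field_simp
  have f_mem_Lp : ∀ {e u : ℝ}, 0 < e → 0 < u →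
      MemLp (f e u) (ENNReal.ofReal (1 / e)) (volume.restrict (Ioo (0:ℝ) 1)) := by
    intro e u he hu
    have A : ENNReal.ofReal (1 / e) ≠ 0 := by
      rwa [Ne, ENNReal.ofReal_eq_zero, not_le, one_div_pos]
    have B : ENNReal.ofReal (1 / e) ≠ ⊤ := ENNReal.ofReal_ne_top
    rw [← memLp_norm_rpow_iff _ A B, ENNReal.toReal_ofReal (one_div_nonneg.mpr he.le),
      ENNReal.div_self A B, memLp_one_iff_integrable]
    · have hI : IntegrableOn (fun x : ℝ => x ^ (u - 1) * (1 - x) ^ (w - 1)) (Ioo (0:ℝ) 1) := by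
        have := myBeta_integrableOn hu hw
        unfold IntegrableOn at this ⊢
        rwa [Measure.restrict_congr_set Ioo_ae_eq_Ioc]
      apply Integrable.congr hI
      filter_upwards [ae_restrict_mem measurableSet_Ioo] with x hx
      rw [fpow he u hx]
      congr 1
      exact (norm_of_nonneg (posf _ _ x hx)).symm
    · refine ContinuousOn.aestronglyMeasurable ?_ measurableSet_Ioo
      refine continuousOn_of_forall_continuousAt fun x hx => ?_
      have h1 : ContinuousAt (fun y : ℝ => y ^ (e * (u - 1))) x :=
        Real.continuousAt_rpow_const _ _ (Or.inl hx.1.ne')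
      have h2 : ContinuousAt (fun y : ℝ => (1 - y) ^ (e * (w - 1))) x := by
        have : (1:ℝ) - x ≠ 0 := by have := hx.2; intro h; linarith [sub_eq_zero.mp h]
        exact (Real.continuousAt_rpow_const _ _ (Or.inl this)).comp
          ((continuous_const.sub continuous_id).continuousAt)
      exact h1.mul h2
  rw [hBIoo, hBIoo, hBIoo]
  convert MeasureTheory.integral_mul_le_Lp_mul_Lq_of_nonneg e (posf' a s) (posf' b t)
      (f_mem_Lp ha hs) (f_mem_Lp hb ht) using 1
  · refine setIntegral_congr_fun measurableSet_Ioo fun x hx => ?_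
    dsimp only [f]
    have h1x : (0:ℝ) < 1 - x := by linarith [hx.2]
    have A : x ^ (a * s + b * t - 1) = x ^ (a * (s - 1)) * x ^ (b * (t - 1)) := by
      rw [← Real.rpow_add hx.1]; congr 1; nlinarith
    have B : (1 - x) ^ (w - 1) = (1 - x) ^ (a * (w - 1)) * (1 - x) ^ (b * (w - 1)) := by
      rw [← Real.rpow_add h1x]; congr 1; nlinarith
    rw [A, B]; ring
  · rw [one_div_one_div, one_div_one_div]
    rw [setIntegral_congr_fun measurableSet_Ioo fun x hx => fpow ha s hx,
      setIntegral_congr_fun measurableSet_Ioo fun x hx => fpow hb t hx]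

lemma ratio_logconvex {a c : ℝ} (ha : 0 < a) (hac : a ≤ c) {u v lam mu' : ℝ}
    (hu : 0 ≤ u) (hv : 0 ≤ v) (hl : 0 < lam) (hm : 0 < mu') (hlm : lam + mu' = 1) :
    Real.Gamma (a + (lam * u + mu' * v)) / Real.Gamma (c + (lam * u + mu' * v)) ≤
      (Real.Gamma (a + u) / Real.Gamma (c + u)) ^ lam *
        (Real.Gamma (a + v) / Real.Gamma (c + v)) ^ mu' := by
  have hcomb : 0 ≤ lam * u + mu' * v := by positivity
  rcases eq_or_lt_of_le hac with rfl | hlt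
  · have h1 : ∀ x : ℝ, 0 ≤ x → Real.Gamma (a + x) / Real.Gamma (a + x) = 1 := fun x hx =>
      div_self (Real.Gamma_pos_of_pos (by linarith)).ne'
    rw [h1 _ hcomb, h1 _ hu, h1 _ hv, Real.one_rpow, Real.one_rpow, mul_one]
  · set w := c - a with hw
    have hwpos : 0 < w := by simp [hw]; linarith
    have hΓw : 0 < Real.Gamma w := Real.Gamma_pos_of_pos hwpos
    have key : ∀ x : ℝ, 0 ≤ x →
        Real.Gamma (a + x) / Real.Gamma (c + x) = myBeta w (a + x) / Real.Gamma w := by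
      intro x hx
      have hax : 0 < a + x := by linarith
      have hcx : 0 < Real.Gamma (c + x) := Real.Gamma_pos_of_pos (by linarith)
      have := myBeta_eq hwpos hax
      rw [show a + x + w = c + x by simp [hw]; ring] at this
      field_simp
      linarith [this]
    rw [key _ hcomb, key _ hu, key _ hv]
    have hβpos : ∀ x : ℝ, 0 ≤ x → 0 < myBeta w (a + x) := by
      intro x hx
      have hpos : 0 < Real.Gamma (a + x) / Real.Gamma (c + x) :=
        div_pos (Real.Gamma_pos_of_pos (by linarith)) (Real.Gamma_pos_of_pos (by linarith))
      rw [key x hx] at hpos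
      have := mul_pos hpos hΓw
      rwa [div_mul_cancel₀ _ hΓw.ne'] at this
    rw [Real.div_rpow (hβpos u hu).le hΓw.le, Real.div_rpow (hβpos v hv).le hΓw.le,
      div_mul_div_comm, ← Real.rpow_add hΓw, hlm, Real.rpow_one,
      show a + (lam * u + mu' * v) = lam * (a + u) + mu' * (a + v) by linear_combination (-a) * hlm]
    gcongr
    exact myBeta_mul_add_mul_le hwpos (by linarith) (by linarith) hl hm hlm

lemma fourpoint {a c μ ν : ℝ} (ha : 0 < a) (hac : a ≤ c) (hμ : 0 ≤ μ) (hν : 0 ≤ ν)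
    {x y : ℝ} (hx : 0 ≤ x) (hy : 0 ≤ y) :
    Real.Gamma (a + (ν + x)) / Real.Gamma (c + (ν + x)) *
        (Real.Gamma (a + (μ + y)) / Real.Gamma (c + (μ + y))) +
      Real.Gamma (a + (μ + x)) / Real.Gamma (c + (μ + x)) *
        (Real.Gamma (a + (ν + y)) / Real.Gamma (c + (ν + y))) ≤
    Real.Gamma (a + x) / Real.Gamma (c + x) *
        (Real.Gamma (a + (ν + μ + y)) / Real.Gamma (c + (ν + μ + y))) +
      Real.Gamma (a + y) / Real.Gamma (c + y) *
        (Real.Gamma (a + (ν + μ + x)) / Real.Gamma (c + (ν + μ + x))) := by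
  set h : ℝ → ℝ := fun t => Real.Gamma (a + t) / Real.Gamma (c + t) with hh
  have hpos : ∀ t : ℝ, 0 ≤ t → 0 < h t := fun t ht =>
    div_pos (Real.Gamma_pos_of_pos (by linarith)) (Real.Gamma_pos_of_pos (by linarith))
  show h (ν + x) * h (μ + y) + h (μ + x) * h (ν + y) ≤
      h x * h (ν + μ + y) + h y * h (ν + μ + x)
  rcases eq_or_lt_of_le hν with rfl | hν'
  · have e1 : ∀ t : ℝ, (0:ℝ) + t = t := fun t => zero_add t
    rw [e1, e1, show (0:ℝ) + μ = μ by ring]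
    ring_nf
    exact le_of_eq (by ring)
  rcases eq_or_lt_of_le hμ with rfl | hμ'
  · rw [show ν + (0:ℝ) + y = ν + y by ring, show ν + (0:ℝ) + x = ν + x by ring,
      zero_add, zero_add]
    exact le_of_eq (by ring)
  set lam := ν / (μ + ν) with hlam
  set mu' := μ / (μ + ν) with hmu'
  have hμν : 0 < μ + ν := by linarith
  have hl : 0 < lam := div_pos hν' hμν
  have hm : 0 < mu' := div_pos hμ' hμν
  have hlm : lam + mu' = 1 := by rw [hlam, hmu']; field_simp; ring
  have P := hpos x hx |>.le
  have Q := hpos y hy |>.le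
  have Px := hpos (ν + μ + x) (by linarith) |>.le
  have Py := hpos (ν + μ + y) (by linarith) |>.le
  -- h (ν + x) ≤ h (ν+μ+x) ^ lam * h x ^ mu'
  have b1 : h (ν + x) ≤ h (ν + μ + x) ^ lam * h x ^ mu' := by
    have := ratio_logconvex ha hac (by linarith : (0:ℝ) ≤ ν + μ + x) hx hl hm hlm
    rwa [show lam * (ν + μ + x) + mu' * x = ν + x by
      rw [hlam, hmu']; field_simp; ring] at this
  have b2 : h (μ + y) ≤ h (ν + μ + y) ^ mu' * h y ^ lam := by
    have := ratio_logconvex ha hac (by linarith : (0:ℝ) ≤ ν + μ + y) hy hm hl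
      (by linarith : mu' + lam = 1)
    rwa [show mu' * (ν + μ + y) + lam * y = μ + y by
      rw [hlam, hmu']; field_simp; ring] at this
  have b3 : h (μ + x) ≤ h (ν + μ + x) ^ mu' * h x ^ lam := by
    have := ratio_logconvex ha hac (by linarith : (0:ℝ) ≤ ν + μ + x) hx hm hl
      (by linarith : mu' + lam = 1)
    rwa [show mu' * (ν + μ + x) + lam * x = μ + x by
      rw [hlam, hmu']; field_simp; ring] at this
  have b4 : h (ν + y) ≤ h (ν + μ + y) ^ lam * h y ^ mu' := by
    have := ratio_logconvex ha hac (by linarith : (0:ℝ) ≤ ν + μ + y) hy hl hm hlm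
    rwa [show lam * (ν + μ + y) + mu' * y = ν + y by
      rw [hlam, hmu']; field_simp; ring] at this
  have c1 : h (ν + x) * h (μ + y) ≤
      (h y * h (ν + μ + x)) ^ lam * (h x * h (ν + μ + y)) ^ mu' := by
    calc h (ν + x) * h (μ + y)
        ≤ (h (ν + μ + x) ^ lam * h x ^ mu') * (h (ν + μ + y) ^ mu' * h y ^ lam) :=
          mul_le_mul b1 b2 (hpos _ (by linarith)).le (by positivity)
      _ = (h y * h (ν + μ + x)) ^ lam * (h x * h (ν + μ + y)) ^ mu' := by
          rw [Real.mul_rpow Q Px, Real.mul_rpow P Py]; ring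
  have c2 : h (μ + x) * h (ν + y) ≤
      (h y * h (ν + μ + x)) ^ mu' * (h x * h (ν + μ + y)) ^ lam := by
    calc h (μ + x) * h (ν + y)
        ≤ (h (ν + μ + x) ^ mu' * h x ^ lam) * (h (ν + μ + y) ^ lam * h y ^ mu') :=
          mul_le_mul b3 b4 (hpos _ (by linarith)).le (by positivity)
      _ = (h y * h (ν + μ + x)) ^ mu' * (h x * h (ν + μ + y)) ^ lam := by
          rw [Real.mul_rpow Q Px, Real.mul_rpow P Py]; ring
  have d1 : (h y * h (ν + μ + x)) ^ lam * (h x * h (ν + μ + y)) ^ mu' ≤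
      lam * (h y * h (ν + μ + x)) + mu' * (h x * h (ν + μ + y)) :=
    Real.geom_mean_le_arith_mean2_weighted hl.le hm.le (by positivity) (by positivity) hlm
  have d2 : (h y * h (ν + μ + x)) ^ mu' * (h x * h (ν + μ + y)) ^ lam ≤
      mu' * (h y * h (ν + μ + x)) + lam * (h x * h (ν + μ + y)) :=
    Real.geom_mean_le_arith_mean2_weighted hm.le hl.le (by positivity) (by positivity)
      (by linarith)
  have eA : lam * (h y * h (ν + μ + x)) + mu' * (h y * h (ν + μ + x)) = h y * h (ν + μ + x) := by
    linear_combination (h y * h (ν + μ + x)) * hlm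
  have eB : lam * (h x * h (ν + μ + y)) + mu' * (h x * h (ν + μ + y)) = h x * h (ν + μ + y) := by
    linear_combination (h x * h (ν + μ + y)) * hlm
  linarith [c1.trans d1, c2.trans d2, eA, eB]

theorem stmt_16 (a c μ ν : ℝ) (hac : a ≤ c) (ha : 0 < a) (hμ : 0 ≤ μ) (hν : 0 ≤ ν)
    (g : ℕ → ℝ) (hg : ∀ n, 0 ≤ g n) (m : ℕ) :
    ∑ k ∈ Finset.range (m + 1),
        g k * g (m - k) / (k.factorial * (m - k).factorial) *
          (Real.Gamma (a + ν + k) * Real.Gamma (a + μ + (m - k : ℕ)) /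
              (Real.Gamma (c + ν + k) * Real.Gamma (c + μ + (m - k : ℕ))) -
            Real.Gamma (a + k) * Real.Gamma (a + ν + μ + (m - k : ℕ)) /
              (Real.Gamma (c + k) * Real.Gamma (c + ν + μ + (m - k : ℕ)))) ≤ 0 := by
  set h : ℝ → ℝ := fun t => Real.Gamma (a + t) / Real.Gamma (c + t) with hh
  set F : ℕ → ℝ := fun k =>
    g k * g (m - k) / (k.factorial * (m - k).factorial) *
      (h (ν + k) * h (μ + (m - k : ℕ)) - h (k : ℕ) * h (ν + μ + (m - k : ℕ))) with hF
  have hconv : ∑ k ∈ Finset.range (m + 1),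
      g k * g (m - k) / (k.factorial * (m - k).factorial) *
        (Real.Gamma (a + ν + k) * Real.Gamma (a + μ + (m - k : ℕ)) /
            (Real.Gamma (c + ν + k) * Real.Gamma (c + μ + (m - k : ℕ))) -
          Real.Gamma (a + k) * Real.Gamma (a + ν + μ + (m - k : ℕ)) /
            (Real.Gamma (c + k) * Real.Gamma (c + ν + μ + (m - k : ℕ)))) =
      ∑ k ∈ Finset.range (m + 1), F k := by
    refine Finset.sum_congr rfl fun k _ => ?_
    simp only [hF, hh]
    rw [div_mul_div_comm, div_mul_div_comm]
    ring_nf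
  rw [hconv]
  have hrefl : ∑ k ∈ Finset.range (m + 1), F (m - k) = ∑ k ∈ Finset.range (m + 1), F k := by
    have := Finset.sum_range_reflect F (m + 1)
    simpa using this
  have hpair : ∀ k ∈ Finset.range (m + 1), F k + F (m - k) ≤ 0 := by
    intro k hk
    have hkm : k ≤ m := Nat.lt_succ_iff.mp (Finset.mem_range.mp hk)
    have hsub : m - (m - k) = k := Nat.sub_sub_self hkm
    have hw : 0 ≤ g k * g (m - k) / ((k.factorial : ℝ) * (m - k).factorial) :=
      div_nonneg (mul_nonneg (hg k) (hg (m - k))) (by positivity)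
    have hfp := fourpoint ha hac hμ hν (x := (k : ℝ)) (y := ((m - k : ℕ) : ℝ))
      (Nat.cast_nonneg k) (Nat.cast_nonneg _)
    simp only [hF, hsub]
    have hwc : g (m - k) * g k / ((m - k).factorial * k.factorial) =
        g k * g (m - k) / (k.factorial * (m - k).factorial) := by ring
    rw [hwc]
    rw [← mul_add]
    apply mul_nonpos_of_nonneg_of_nonpos hw
    have : h (ν + (k:ℝ)) * h (μ + ((m-k:ℕ):ℝ)) + h (μ + (k:ℝ)) * h (ν + ((m-k:ℕ):ℝ)) ≤
        h (k:ℝ) * h (ν + μ + ((m-k:ℕ):ℝ)) + h ((m-k:ℕ):ℝ) * h (ν + μ + (k:ℝ)) := hfp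
    linarith [this]
  have h2 : (∑ k ∈ Finset.range (m + 1), F k) + (∑ k ∈ Finset.range (m + 1), F k) ≤ 0 := by
    calc (∑ k ∈ Finset.range (m + 1), F k) + (∑ k ∈ Finset.range (m + 1), F k)
        = ∑ k ∈ Finset.range (m + 1), (F k + F (m - k)) := by
          rw [Finset.sum_add_distrib, hrefl]
      _ ≤ ∑ k ∈ Finset.range (m + 1), (0:ℝ) := Finset.sum_le_sum hpair
      _ = 0 := by simp
  linarith
end

section
/- Let a > c > 0, μ ≥ 0, m ≥ 1 an integer, and 0 ≤ k < m/2. If (a)_k(a+μ)_{m−k}/((c+1)_k(c+1+μ)_{m−k})·(m−2k+μ) − (a)_{m−k}(a+μ)_k/((c+1)_{m−k}(c+1+μ)_k)·(m−2k−μ) < 0 and a > c+1, then the same expression with k replaced by k−1 (for k ≥ 1) is also negative. -/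
lemma risingFactorial_pos {x : ℝ} (hx : 0 < x) (n : ℕ) : 0 < risingFactorial x n := by
  apply Finset.prod_pos
  intro i _
  have : (0:ℝ) ≤ i := Nat.cast_nonneg i
  linarith

lemma risingFactorial_succ (x : ℝ) (n : ℕ) :
    risingFactorial x (n + 1) = risingFactorial x n * (x + n) :=
  Finset.prod_range_succ _ _

set_option maxHeartbeats 800000 in
theorem stmt_17 (a c μ : ℝ) (hc : 0 < c) (hac : c + 1 < a) (hμ : 0 ≤ μ)
    (m k : ℕ) (hm : 1 ≤ m) (hk1 : 1 ≤ k) (hk : 2 * k < m)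
    (hMk :
      risingFactorial a k * risingFactorial (a + μ) (m - k) /
            (risingFactorial (c + 1) k * risingFactorial (c + 1 + μ) (m - k)) *
          ((m : ℝ) - 2 * k + μ) -
        risingFactorial a (m - k) * risingFactorial (a + μ) k /
            (risingFactorial (c + 1) (m - k) * risingFactorial (c + 1 + μ) k) *
          ((m : ℝ) - 2 * k - μ) < 0) :
    risingFactorial a (k - 1) * risingFactorial (a + μ) (m - (k - 1)) /
          (risingFactorial (c + 1) (k - 1) * risingFactorial (c + 1 + μ) (m - (k - 1))) *
        ((m : ℝ) - 2 * (k - 1 : ℕ) + μ) -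
      risingFactorial a (m - (k - 1)) * risingFactorial (a + μ) (k - 1) /
          (risingFactorial (c + 1) (m - (k - 1)) * risingFactorial (c + 1 + μ) (k - 1)) *
        ((m : ℝ) - 2 * (k - 1 : ℕ) - μ) < 0 := by
  obtain ⟨j, rfl⟩ : ∃ j, k = j + 1 := ⟨k - 1, by omega⟩
  obtain ⟨n, rfl⟩ : ∃ n, m = n + (j + 1) := ⟨m - (j + 1), by omega⟩
  have hnj : j + 2 ≤ n := by omega
  have g1 : n + (j + 1) - (j + 1) = n := by omega
  have g2 : n + (j + 1) - (j + 1 - 1) = n + 1 := by omega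
  have g3 : j + 1 - 1 = j := by omega
  rw [g1] at hMk
  rw [g2, g3]
  have e1 : ((n + (j + 1) : ℕ) : ℝ) - 2 * ((j + 1 : ℕ) : ℝ) + μ
      = (n : ℝ) - (j : ℝ) - 1 + μ := by push_cast; ring
  have e2 : ((n + (j + 1) : ℕ) : ℝ) - 2 * ((j + 1 : ℕ) : ℝ) - μ
      = (n : ℝ) - (j : ℝ) - 1 - μ := by push_cast; ring
  have e3 : ((n + (j + 1) : ℕ) : ℝ) - 2 * ((j : ℕ) : ℝ) + μ
      = (n : ℝ) - (j : ℝ) - 1 + 2 + μ := by push_cast; ring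
  have e4 : ((n + (j + 1) : ℕ) : ℝ) - 2 * ((j : ℕ) : ℝ) - μ
      = (n : ℝ) - (j : ℝ) - 1 + 2 - μ := by push_cast; ring
  rw [risingFactorial_succ a j, risingFactorial_succ (a + μ) j,
      risingFactorial_succ (c + 1) j, risingFactorial_succ (c + 1 + μ) j, e1, e2] at hMk
  rw [risingFactorial_succ a n, risingFactorial_succ (a + μ) n,
      risingFactorial_succ (c + 1) n, risingFactorial_succ (c + 1 + μ) n, e3, e4]
  set s : ℝ := (n : ℝ) - (j : ℝ) - 1 with hs
  set A1 := risingFactorial a j with hA1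
  set A2 := risingFactorial (a + μ) j with hA2
  set B1 := risingFactorial (c + 1) j with hB1
  set B2 := risingFactorial (c + 1 + μ) j with hB2
  set C1 := risingFactorial a n with hC1
  set C2 := risingFactorial (a + μ) n with hC2
  set D1 := risingFactorial (c + 1) n with hD1
  set D2 := risingFactorial (c + 1 + μ) n with hD2
  have ha : (0:ℝ) < a := by linarith
  have haμ : (0:ℝ) < a + μ := by linarith
  have hc1 : (0:ℝ) < c + 1 := by linarith
  have hc1μ : (0:ℝ) < c + 1 + μ := by linarith
  have hjr : (0:ℝ) ≤ (j:ℝ) := Nat.cast_nonneg j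
  have hnr : (0:ℝ) ≤ (n:ℝ) := Nat.cast_nonneg n
  have hs1 : (1:ℝ) ≤ s := by
    have : ((j:ℝ) + 2) ≤ (n:ℝ) := by exact_mod_cast hnj
    rw [hs]; linarith
  have pA1 : 0 < A1 := risingFactorial_pos ha j
  have pA2 : 0 < A2 := risingFactorial_pos haμ j
  have pB1 : 0 < B1 := risingFactorial_pos hc1 j
  have pB2 : 0 < B2 := risingFactorial_pos hc1μ j
  have pC1 : 0 < C1 := risingFactorial_pos ha n
  have pC2 : 0 < C2 := risingFactorial_pos haμ n
  have pD1 : 0 < D1 := risingFactorial_pos hc1 n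
  have pD2 : 0 < D2 := risingFactorial_pos hc1μ n
  have hp : (0:ℝ) < a + ↑j := by linarith
  have hpμ : (0:ℝ) < a + μ + ↑j := by linarith
  have hq : (0:ℝ) < a + ↑n := by linarith
  have hqμ : (0:ℝ) < a + μ + ↑n := by linarith
  have hu : (0:ℝ) < c + 1 + ↑j := by linarith
  have huμ : (0:ℝ) < c + 1 + μ + ↑j := by linarith
  have hv : (0:ℝ) < c + 1 + ↑n := by linarith
  have hvμ : (0:ℝ) < c + 1 + μ + ↑n := by linarith
  have hB : (0:ℝ) < B1 * (c + 1 + ↑j) * D2 := mul_pos (mul_pos pB1 hu) pD2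
  have hD : (0:ℝ) < D1 * (B2 * (c + 1 + μ + ↑j)) := mul_pos pD1 (mul_pos pB2 huμ)
  rw [sub_neg, div_mul_eq_mul_div, div_mul_eq_mul_div, div_lt_div_iff₀ hB hD] at hMk
  have hBg : (0:ℝ) < B1 * (D2 * (c + 1 + μ + ↑n)) := mul_pos pB1 (mul_pos pD2 hvμ)
  have hDg : (0:ℝ) < D1 * (c + 1 + ↑n) * B2 := mul_pos (mul_pos pD1 hv) pB2
  rw [sub_neg, div_mul_eq_mul_div, div_mul_eq_mul_div, div_lt_div_iff₀ hBg hDg]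
  -- deduce 0 < s - μ
  have hL : 0 < A1 * (a + ↑j) * C2 * (s + μ) * (D1 * (B2 * (c + 1 + μ + ↑j))) := by
    have hsμ' : (0:ℝ) < s + μ := by linarith
    exact mul_pos (mul_pos (mul_pos (mul_pos pA1 hp) pC2) hsμ') hD
  have hE : 0 < C1 * (A2 * (a + μ + ↑j)) := mul_pos pC1 (mul_pos pA2 hpμ)
  have hsμ : 0 < s - μ := by
    by_contra hcon
    push_neg at hcon
    have h1 : C1 * (A2 * (a + μ + ↑j)) * (s - μ) ≤ 0 :=
      mul_nonpos_of_nonneg_of_nonpos hE.le hcon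
    have h2 : C1 * (A2 * (a + μ + ↑j)) * (s - μ) * (B1 * (c + 1 + ↑j) * D2) ≤ 0 :=
      mul_nonpos_of_nonpos_of_nonneg h1 hB.le
    linarith [hL.trans hMk]
  -- key factorwise inequalities
  have hacμ : (0:ℝ) ≤ μ * (a - (c + 1)) := mul_nonneg hμ (by linarith)
  have f1 : (a + μ + ↑j) * (c + 1 + ↑j) ≤ (a + ↑j) * (c + 1 + μ + ↑j) := by
    have h : (a + ↑j) * (c + 1 + μ + ↑j) - (a + μ + ↑j) * (c + 1 + ↑j) = μ * (a - (c + 1)) := by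
      ring
    linarith [h, hacμ]
  have f2 : (a + μ + ↑n) * (c + 1 + ↑n) ≤ (a + ↑n) * (c + 1 + μ + ↑n) := by
    have h : (a + ↑n) * (c + 1 + μ + ↑n) - (a + μ + ↑n) * (c + 1 + ↑n) = μ * (a - (c + 1)) := by
      ring
    linarith [h, hacμ]
  have f3 : (s - μ) * (s + 2 + μ) ≤ (s + μ) * (s + 2 - μ) := by
    have h : (s + μ) * (s + 2 - μ) - (s - μ) * (s + 2 + μ) = 4 * μ := by ring
    linarith [h, hμ]
  have h12 : (a + μ + ↑j) * (c + 1 + ↑j) * ((s - μ) * (s + 2 + μ))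
      ≤ (a + ↑j) * (c + 1 + μ + ↑j) * ((s + μ) * (s + 2 - μ)) :=
    mul_le_mul f1 f3 (mul_nonneg hsμ.le (by linarith)) (mul_nonneg hp.le huμ.le)
  have key : (a + μ + ↑j) * (c + 1 + ↑j) * ((s - μ) * (s + 2 + μ)) * ((a + μ + ↑n) * (c + 1 + ↑n))
      ≤ (a + ↑j) * (c + 1 + μ + ↑j) * ((s + μ) * (s + 2 - μ)) * ((a + ↑n) * (c + 1 + μ + ↑n)) :=
    mul_le_mul h12 f2 (mul_nonneg hqμ.le hv.le)
      (mul_nonneg (mul_nonneg hp.le huμ.le) (mul_nonneg (by linarith) (by linarith)))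
  have hP : (0:ℝ) < (a + ↑j) * (s + μ) * (c + 1 + μ + ↑j) :=
    mul_pos (mul_pos hp (by linarith)) huμ
  have hQ : (0:ℝ) < (a + μ + ↑n) * (s + 2 + μ) * (c + 1 + ↑n) :=
    mul_pos (mul_pos hqμ (by linarith)) hv
  have hH : (0:ℝ) < C1 * A2 * B1 * D2 := mul_pos (mul_pos (mul_pos pC1 pA2) pB1) pD2
  refine lt_of_mul_lt_mul_right ?_ hP.le
  calc A1 * (C2 * (a + μ + ↑n)) * (s + 2 + μ) * (D1 * (c + 1 + ↑n) * B2)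
        * ((a + ↑j) * (s + μ) * (c + 1 + μ + ↑j))
      = A1 * (a + ↑j) * C2 * (s + μ) * (D1 * (B2 * (c + 1 + μ + ↑j)))
        * ((a + μ + ↑n) * (s + 2 + μ) * (c + 1 + ↑n)) := by ring
    _ < C1 * (A2 * (a + μ + ↑j)) * (s - μ) * (B1 * (c + 1 + ↑j) * D2)
        * ((a + μ + ↑n) * (s + 2 + μ) * (c + 1 + ↑n)) := mul_lt_mul_of_pos_right hMk hQ
    _ = (C1 * A2 * B1 * D2) * ((a + μ + ↑j) * (c + 1 + ↑j) * ((s - μ) * (s + 2 + μ))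
        * ((a + μ + ↑n) * (c + 1 + ↑n))) := by ring
    _ ≤ (C1 * A2 * B1 * D2) * ((a + ↑j) * (c + 1 + μ + ↑j) * ((s + μ) * (s + 2 - μ))
        * ((a + ↑n) * (c + 1 + μ + ↑n))) := mul_le_mul_of_nonneg_left key hH.le
    _ = C1 * (a + ↑n) * A2 * (s + 2 - μ) * (B1 * (D2 * (c + 1 + μ + ↑n)))
        * ((a + ↑j) * (s + μ) * (c + 1 + μ + ↑j)) := by ring
end

section
/- Let c ≥ a > 0 and x ≥ 0. Then ₁F₁(a+1;c+1;x)² − ₁F₁(a;c;x)·₁F₁(a+2;c+2;x) ≥ 2x(c−a)/(c(c+1)(c+2)), and ₁F₁(a+1;c+1;x)² − ₁F₁(a;c;x)·₁F₁(a+2;c+2;x) ≤ (c−a)/(c(a+1)) · ₁F₁(a+1;c+1;x)². -/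
namespace Stmt18Aux

open Finset

noncomputable def rho (a c : ℝ) (k : ℕ) : ℝ := risingFactorial a k / risingFactorial c k

noncomputable def ff (a c : ℝ) (k : ℕ) : ℝ := (a + k) / (c + k)

noncomputable def Zar (a c : ℝ) (N p q : ℕ) : ℝ :=
  ∑ k ∈ range (N + 1), (N.choose k : ℝ) * (rho a c (k + p) * rho a c (N - k + q))

lemma risingFactorial_zero (a : ℝ) : risingFactorial a 0 = 1 := by
  simp [risingFactorial]

lemma risingFactorial_succ (a : ℝ) (n : ℕ) :
    risingFactorial a (n + 1) = risingFactorial a n * (a + n) := by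
  simp [risingFactorial, Finset.prod_range_succ]

lemma risingFactorial_pos {a : ℝ} (ha : 0 < a) (n : ℕ) : 0 < risingFactorial a n := by
  refine Finset.prod_pos fun i _ => ?_
  positivity


lemma risingFactorial_le {a c : ℝ} (ha : 0 < a) (hac : a ≤ c) (n : ℕ) :
    risingFactorial a n ≤ risingFactorial c n := by
  refine Finset.prod_le_prod (fun i _ => ?_) (fun i _ => ?_)
  · positivity
  · linarith

lemma risingFactorial_shift (a : ℝ) (k : ℕ) :
    risingFactorial (a + 1) k * a = risingFactorial a (k + 1) := by
  induction k with
  | zero => simp [risingFactorial_zero, risingFactorial_succ]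
  | succ k ih =>
      rw [risingFactorial_succ, risingFactorial_succ a (k + 1)]
      push_cast
      rw [← ih]
      ring

lemma risingFactorial_shift2 (a : ℝ) (k : ℕ) :
    risingFactorial (a + 2) k * (a * (a + 1)) = risingFactorial a (k + 2) := by
  have h1 := risingFactorial_shift (a + 1) k
  have h2 := risingFactorial_shift a (k + 1)
  have h3 : a + 1 + 1 = a + 2 := by ring
  rw [h3] at h1
  calc risingFactorial (a + 2) k * (a * (a + 1))
      = risingFactorial (a + 2) k * (a + 1) * a := by ring
    _ = risingFactorial (a + 1) (k + 1) * a := by rw [h1]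
    _ = risingFactorial a (k + 2) := h2

variable {a c : ℝ}


lemma rho_pos (ha : 0 < a) (hc : 0 < c) (k : ℕ) : 0 < rho a c k :=
  div_pos (risingFactorial_pos ha k) (risingFactorial_pos hc k)

lemma ff_pos (ha : 0 < a) (hc : 0 < c) (k : ℕ) : 0 < ff a c k := by
  have h1 : (0:ℝ) < a + k := by positivity
  have h2 : (0:ℝ) < c + k := by positivity
  exact div_pos h1 h2

lemma rho_succ (k : ℕ) : rho a c (k + 1) = rho a c k * ff a c k := by
  unfold rho ff
  rw [risingFactorial_succ, risingFactorial_succ, div_mul_div_comm]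

lemma ff_diff (hc : 0 < c) (t : ℕ) :
    ff a c (t + 1) - ff a c t = (c - a) / ((c + t) * (c + t + 1)) := by
  unfold ff
  have h1 : (0:ℝ) < c + t := by positivity
  have h2 : (0:ℝ) < c + (t:ℝ) + 1 := by positivity
  push_cast
  field_simp
  ring

lemma ff_diff_le (ha : 0 < a) (hac : a ≤ c) {i j : ℕ} (hij : i ≤ j) :
    ff a c (j + 1) + ff a c i ≤ ff a c j + ff a c (i + 1) := by
  have hc : 0 < c := lt_of_lt_of_le ha hac
  have h1 := ff_diff (a := a) hc i
  have h2 := ff_diff (a := a) hc j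
  have hle : (c - a) / ((c + j) * (c + j + 1)) ≤ (c - a) / ((c + i) * (c + i + 1)) := by
    have hi1 : (0:ℝ) < c + i := by positivity
    have hi2 : (0:ℝ) < (c + i) * (c + i + 1) := by positivity
    have hij' : (i:ℝ) ≤ j := Nat.cast_le.mpr hij
    have hm : (c + (i:ℝ)) * (c + i + 1) ≤ (c + j) * (c + j + 1) := by nlinarith
    gcongr
  linarith

lemma Zar_nonneg (ha : 0 < a) (hc : 0 < c) (N p q : ℕ) : 0 ≤ Zar a c N p q := by
  refine Finset.sum_nonneg fun k _ => ?_
  have := rho_pos ha hc (k + p)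
  have := rho_pos ha hc (N - k + q)
  positivity

lemma Zar_symm (N p q : ℕ) : Zar a c N p q = Zar a c N q p := by
  unfold Zar
  rw [← Finset.sum_range_reflect]
  refine Finset.sum_congr rfl fun k hk => ?_
  have hk' : k ≤ N := Nat.lt_succ_iff.mp (Finset.mem_range.mp hk)
  have h1 : N + 1 - 1 - k = N - k := by omega
  have h2 : N - (N - k) = k := by omega
  rw [h1, Nat.choose_symm hk', h2]
  ring

lemma Zar_pascal (N p q : ℕ) :
    Zar a c (N + 1) p q = Zar a c N (p + 1) q + Zar a c N p (q + 1) := by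
  have hL : Zar a c (N+1) p q
      = (∑ k ∈ range (N+1), (((N+1).choose (k+1) : ℝ)) * (rho a c (k+1+p) * rho a c (N-k+q)))
        + rho a c p * rho a c (N+1+q) := by
    unfold Zar
    rw [Finset.sum_range_succ' (fun k => (((N+1).choose k : ℝ)) * (rho a c (k + p) * rho a c (N + 1 - k + q))) (N+1)]
    congr 1
    · refine Finset.sum_congr rfl fun k hk => ?_
      have : N + 1 - (k + 1) = N - k := by omega
      rw [this]
    · simp
  have hR1 : Zar a c N (p+1) q
      = ∑ k ∈ range (N+1), ((N.choose k : ℝ)) * (rho a c (k+1+p) * rho a c (N-k+q)) := by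
    unfold Zar
    refine Finset.sum_congr rfl fun k hk => ?_
    have : k + (p + 1) = k + 1 + p := by omega
    rw [this]
  have hR2 : Zar a c N p (q+1)
      = (∑ k ∈ range (N+1), ((N.choose (k+1) : ℝ)) * (rho a c (k+1+p) * rho a c (N-k+q)))
        + rho a c p * rho a c (N+1+q) := by
    have ha' : ∑ k ∈ range (N+2), ((N.choose k : ℝ)) * (rho a c (k + p) * rho a c (N + 1 - k + q))
        = Zar a c N p (q+1) := by
      rw [Finset.sum_range_succ]
      have hz : (N.choose (N+1) : ℝ) = 0 := by
        rw [Nat.choose_eq_zero_of_lt (by omega)]; norm_num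
      rw [hz, zero_mul, add_zero]
      unfold Zar
      refine Finset.sum_congr rfl fun k hk => ?_
      have hk' : k ≤ N := Nat.lt_succ_iff.mp (Finset.mem_range.mp hk)
      have : N + 1 - k + q = N - k + (q + 1) := by omega
      rw [this]
    have hb : ∑ k ∈ range (N+2), ((N.choose k : ℝ)) * (rho a c (k + p) * rho a c (N + 1 - k + q))
        = (∑ k ∈ range (N+1), ((N.choose (k+1) : ℝ)) * (rho a c (k+1+p) * rho a c (N-k+q)))
          + rho a c p * rho a c (N+1+q) := by
      rw [Finset.sum_range_succ' (fun k => ((N.choose k : ℝ)) * (rho a c (k + p) * rho a c (N + 1 - k + q))) (N+1)]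
      congr 1
      · refine Finset.sum_congr rfl fun k hk => ?_
        have : N + 1 - (k + 1) = N - k := by omega
        rw [this]
      · simp
    rw [← ha', hb]
  have hsplit : ∑ k ∈ range (N+1), (((N+1).choose (k+1) : ℝ)) * (rho a c (k+1+p) * rho a c (N-k+q))
      = (∑ k ∈ range (N+1), ((N.choose k : ℝ)) * (rho a c (k+1+p) * rho a c (N-k+q)))
        + ∑ k ∈ range (N+1), ((N.choose (k+1) : ℝ)) * (rho a c (k+1+p) * rho a c (N-k+q)) := by
    rw [← Finset.sum_add_distrib]
    refine Finset.sum_congr rfl fun k hk => ?_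
    rw [Nat.choose_succ_succ]
    push_cast
    ring
  rw [hL, hR1, hR2, hsplit]
  ring

lemma key (ha : 0 < a) (hac : a ≤ c) :
    ∀ N p q : ℕ, q < p →
      ff a c q * Zar a c N (p + 1) q ≤ ff a c p * Zar a c N p (q + 1) := by
  have hc : 0 < c := lt_of_lt_of_le ha hac
  intro N
  induction N with
  | zero =>
      intro p q _
      have : ∀ p' q' : ℕ, Zar a c 0 p' q' = rho a c p' * rho a c q' := by
        intro p' q'
        unfold Zar
        simp
      rw [this, this]
      simp only [rho_succ]
      ring_nf
      exact le_refl _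
  | succ N ih =>
      intro p q hqp
      rw [Zar_pascal, Zar_pascal]
      have hfq : 0 < ff a c q := ff_pos ha hc q
      have hfp : 0 < ff a c p := ff_pos ha hc p
      have hZ : 0 ≤ Zar a c N (p+1) (q+1) := Zar_nonneg ha hc _ _ _
      -- step (i): f q * Z N (p+2) q ≤ f (p+1) * Z N (p+1) (q+1)
      have hi : ff a c q * Zar a c N (p + 1 + 1) q ≤ ff a c (p+1) * Zar a c N (p+1) (q+1) :=
        ih (p+1) q (by omega)
      -- step (ii): f (q+1) * Z N (p+1) (q+1) ≤ f p * Z N p (q+2)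
      have hii : ff a c (q+1) * Zar a c N (p+1) (q+1) ≤ ff a c p * Zar a c N p (q+1+1) := by
        rcases lt_or_eq_of_le (Nat.succ_le_of_lt hqp) with h | h
        · exact ih p (q+1) h
        · subst h
          rw [Zar_symm]
      have hdiff : ff a c (p+1) + ff a c q ≤ ff a c p + ff a c (q+1) :=
        ff_diff_le ha hac (le_of_lt hqp)
      have hmid := mul_le_mul_of_nonneg_right hdiff hZ
      rw [add_mul, add_mul] at hmid
      rw [mul_add, mul_add]
      linarith [hi, hii, hmid]

noncomputable def kterm (a c x : ℝ) (n : ℕ) : ℝ :=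
  risingFactorial a n * x ^ n / (risingFactorial c n * n.factorial)

lemma ff_mono (hac : a ≤ c) (hc : 0 < c) (t : ℕ) : ff a c t ≤ ff a c (t + 1) := by
  have h := ff_diff (a := a) hc t
  have h1 : (0:ℝ) < (c + t) * (c + t + 1) := by positivity
  have h2 : (0:ℝ) ≤ (c - a) / ((c + t) * (c + t + 1)) := by
    apply div_nonneg (by linarith) (le_of_lt h1)
  linarith

lemma rho_le_one (ha : 0 < a) (hac : a ≤ c) (k : ℕ) : rho a c k ≤ 1 := by
  rw [rho, div_le_one (risingFactorial_pos (lt_of_lt_of_le ha hac) k)]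
  exact risingFactorial_le ha hac k

lemma kterm_nonneg (ha : 0 < a) (hc : 0 < c) (hx : 0 ≤ x) (n : ℕ) : 0 ≤ kterm a c x n := by
  unfold kterm
  have h1 := risingFactorial_pos ha n
  have h2 := risingFactorial_pos hc n
  have h3 : (0:ℝ) < n.factorial := by exact_mod_cast Nat.factorial_pos n
  positivity

lemma kterm_le (ha : 0 < a) (hac : a ≤ c) (hx : 0 ≤ x) (n : ℕ) :
    kterm a c x n ≤ x ^ n / n.factorial := by
  have hc : 0 < c := lt_of_lt_of_le ha hac
  have h1 := risingFactorial_pos ha n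
  have h2 := risingFactorial_pos hc n
  have h3 : (0:ℝ) < n.factorial := by exact_mod_cast Nat.factorial_pos n
  have key : kterm a c x n = rho a c n * (x ^ n / n.factorial) := by
    unfold kterm rho
    field_simp
  rw [key]
  have h4 : (0:ℝ) ≤ x ^ n / n.factorial := by positivity
  calc rho a c n * (x ^ n / n.factorial) ≤ 1 * (x ^ n / n.factorial) :=
        mul_le_mul_of_nonneg_right (rho_le_one ha hac n) h4
    _ = x ^ n / n.factorial := one_mul _

lemma kterm_summable (ha : 0 < a) (hac : a ≤ c) (hx : 0 ≤ x) :
    Summable (kterm a c x) := by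
  have hc : 0 < c := lt_of_lt_of_le ha hac
  exact Summable.of_nonneg_of_le (kterm_nonneg ha hc hx)
    (kterm_le ha hac hx) (Real.summable_pow_div_factorial x)

lemma kterm_norm_summable (ha : 0 < a) (hac : a ≤ c) (hx : 0 ≤ x) :
    Summable (fun n => ‖kterm a c x n‖) := by
  have hc : 0 < c := lt_of_lt_of_le ha hac
  refine (kterm_summable ha hac hx).congr fun n => ?_
  rw [Real.norm_of_nonneg (kterm_nonneg ha hc hx n)]

lemma kterm_eq_alpha (hc : 0 < c) (x : ℝ) (k : ℕ) :
    kterm a c x k = rho a c k * x ^ k / k.factorial := by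
  unfold kterm rho
  have h2 := risingFactorial_pos hc k
  have h3 : (0:ℝ) < k.factorial := by exact_mod_cast Nat.factorial_pos k
  field_simp

lemma kterm_eq_beta (ha : 0 < a) (hc : 0 < c) (x : ℝ) (k : ℕ) :
    kterm (a + 1) (c + 1) x k = (c / a) * (rho a c (k + 1) * x ^ k / k.factorial) := by
  unfold kterm rho
  rw [← risingFactorial_shift a k, ← risingFactorial_shift c k]
  have h1 := risingFactorial_pos (by linarith : (0:ℝ) < a + 1) k
  have h2 := risingFactorial_pos (by linarith : (0:ℝ) < c + 1) k
  have h3 : (0:ℝ) < k.factorial := by exact_mod_cast Nat.factorial_pos k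
  field_simp

lemma kterm_eq_gamma (ha : 0 < a) (hc : 0 < c) (x : ℝ) (k : ℕ) :
    kterm (a + 2) (c + 2) x k
      = (c * (c + 1) / (a * (a + 1))) * (rho a c (k + 2) * x ^ k / k.factorial) := by
  unfold kterm rho
  rw [← risingFactorial_shift2 a k, ← risingFactorial_shift2 c k]
  have h1 := risingFactorial_pos (by linarith : (0:ℝ) < a + 2) k
  have h2 := risingFactorial_pos (by linarith : (0:ℝ) < c + 2) k
  have h3 : (0:ℝ) < k.factorial := by exact_mod_cast Nat.factorial_pos k
  field_simp

lemma term_lower (ha : 0 < a) (hc : 0 < c) (x : ℝ) {n k : ℕ} (hk : k ≤ n) :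
    kterm (a+1) (c+1) x k * kterm (a+1) (c+1) x (n-k)
        - kterm a c x k * kterm (a+2) (c+2) x (n-k)
      = x ^ n / n.factorial *
          ((c/a) * ((c/a) * ((n.choose k : ℝ) * (rho a c (k+1) * rho a c (n-k+1)))
            - ((c+1)/(a+1)) * ((n.choose k : ℝ) * (rho a c (k+0) * rho a c (n-k+2))))) := by
  have hx' : x ^ k * x ^ (n-k) = x ^ n := by
    rw [← pow_add]
    congr 1
    omega
  have hfact : ((n.choose k : ℝ)) * k.factorial * (n-k).factorial = n.factorial := by
    exact_mod_cast Nat.choose_mul_factorial_mul_factorial hk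
  have h1 : (k.factorial:ℝ) ≠ 0 := by exact_mod_cast Nat.factorial_ne_zero k
  have h2 : ((n-k).factorial:ℝ) ≠ 0 := by exact_mod_cast Nat.factorial_ne_zero (n-k)
  have h3 : (n.factorial:ℝ) ≠ 0 := by exact_mod_cast Nat.factorial_ne_zero n
  have einv : ((k.factorial:ℝ) * (n-k).factorial)⁻¹ = (n.choose k : ℝ) / n.factorial := by
    rw [eq_div_iff h3, ← hfact]
    field_simp
  rw [kterm_eq_beta ha hc, kterm_eq_beta ha hc, kterm_eq_alpha hc, kterm_eq_gamma ha hc]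
  rw [show c * (c+1) / (a * (a+1)) = (c/a) * ((c+1)/(a+1)) by rw [div_mul_div_comm]]
  calc c / a * (rho a c (k+1) * x ^ k / k.factorial) *
          (c / a * (rho a c (n-k+1) * x ^ (n-k) / (n-k).factorial))
        - rho a c k * x ^ k / k.factorial *
          ((c/a) * ((c+1)/(a+1)) * (rho a c (n-k+2) * x ^ (n-k) / (n-k).factorial))
      = (x ^ k * x ^ (n-k)) * ((k.factorial:ℝ) * (n-k).factorial)⁻¹ *
          ((c/a) * ((c/a) * (rho a c (k+1) * rho a c (n-k+1))
            - ((c+1)/(a+1)) * (rho a c k * rho a c (n-k+2)))) := by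
        ring
    _ = x ^ n * ((n.choose k : ℝ) / n.factorial) *
          ((c/a) * ((c/a) * (rho a c (k+1) * rho a c (n-k+1))
            - ((c+1)/(a+1)) * (rho a c k * rho a c (n-k+2)))) := by
        rw [hx', einv]
    _ = x ^ n / n.factorial *
          ((c/a) * ((c/a) * ((n.choose k : ℝ) * (rho a c (k+1) * rho a c (n-k+1)))
            - ((c+1)/(a+1)) * ((n.choose k : ℝ) * (rho a c (k+0) * rho a c (n-k+2))))) := by
        rw [Nat.add_zero]
        ring

lemma sum_lower (ha : 0 < a) (hc : 0 < c) (x : ℝ) (n : ℕ) :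
    ∑ k ∈ range (n+1), (kterm (a+1) (c+1) x k * kterm (a+1) (c+1) x (n-k)
        - kterm a c x k * kterm (a+2) (c+2) x (n-k))
      = x ^ n / n.factorial *
          ((c/a) * ((c/a) * Zar a c n 1 1 - ((c+1)/(a+1)) * Zar a c n 0 2)) := by
  have h1 : (∑ k ∈ range (n+1), (kterm (a+1) (c+1) x k * kterm (a+1) (c+1) x (n-k)
        - kterm a c x k * kterm (a+2) (c+2) x (n-k)))
      = ∑ k ∈ range (n+1), (x ^ n / n.factorial *
          ((c/a) * ((c/a) * ((n.choose k : ℝ) * (rho a c (k+1) * rho a c (n-k+1)))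
            - ((c+1)/(a+1)) * ((n.choose k : ℝ) * (rho a c (k+0) * rho a c (n-k+2)))))) :=
    Finset.sum_congr rfl fun k hk =>
      term_lower ha hc x (Nat.lt_succ_iff.mp (Finset.mem_range.mp hk))
  rw [h1]
  unfold Zar
  rw [Finset.mul_sum, Finset.mul_sum, ← Finset.sum_sub_distrib, ← Finset.mul_sum,
    ← Finset.mul_sum]

lemma dn_nonneg (ha : 0 < a) (hac : a ≤ c) (x : ℝ) (hx : 0 ≤ x) (n : ℕ) :
    0 ≤ ∑ k ∈ range (n+1), (kterm (a+1) (c+1) x k * kterm (a+1) (c+1) x (n-k)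
        - kterm a c x k * kterm (a+2) (c+2) x (n-k)) := by
  have hc : 0 < c := lt_of_lt_of_le ha hac
  rw [sum_lower ha hc x n]
  have hkey := key ha hac n 1 0 (by omega)
  have hf0 : ff a c 0 = a / c := by unfold ff; norm_num
  have hf1 : ff a c 1 = (a+1) / (c+1) := by unfold ff; norm_num
  rw [hf0, hf1] at hkey
  have hsymm : Zar a c n 0 2 = Zar a c n 2 0 := Zar_symm n 0 2
  rw [hsymm]
  have ha' : a ≠ 0 := ne_of_gt ha
  have hc' : c ≠ 0 := ne_of_gt hc
  have ha1 : (a:ℝ) + 1 ≠ 0 := by linarith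
  have hc1 : (c:ℝ) + 1 ≠ 0 := by linarith
  have hm : (0:ℝ) < (c/a) * ((c+1)/(a+1)) := by
    apply mul_pos <;> apply div_pos <;> linarith
  have hmul := mul_le_mul_of_nonneg_left hkey (le_of_lt hm)
  have e1 : (c/a) * ((c+1)/(a+1)) * (a / c * Zar a c n 2 0)
      = ((c+1)/(a+1)) * Zar a c n 2 0 := by
    field_simp
  have e2 : (c/a) * ((c+1)/(a+1)) * ((a+1)/(c+1) * Zar a c n 1 1)
      = (c/a) * Zar a c n 1 1 := by
    field_simp
  rw [e1, e2] at hmul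
  have hxn : (0:ℝ) ≤ x ^ n / n.factorial := by positivity
  have hca : (0:ℝ) < c / a := div_pos hc ha
  have hin : (0:ℝ) ≤ c/a * Zar a c n 1 1 - (c+1)/(a+1) * Zar a c n 2 0 := by linarith
  exact mul_nonneg hxn (mul_nonneg (le_of_lt hca) hin)

lemma bracket_ineq (ha : 0 < a) (hac : a ≤ c) (k j : ℕ) :
    2 * (rho a c (k+1) * rho a c (j+1)) ≤ rho a c k * rho a c (j+2) + rho a c j * rho a c (k+2) := by
  have hc : 0 < c := lt_of_lt_of_le ha hac
  have e2 : ∀ t : ℕ, rho a c (t+2) = rho a c t * ff a c t * ff a c (t+1) := by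
    intro t
    rw [show t+2 = t+1+1 from rfl, rho_succ, rho_succ]
  rw [e2, e2, rho_succ, rho_succ]
  have hrk := rho_pos ha hc k
  have hrj := rho_pos ha hc j
  have hfk := ff_pos ha hc k
  have hfj := ff_pos ha hc j
  have hmk := ff_mono hac hc k
  have hmj := ff_mono hac hc j
  have key2 : ff a c j * ff a c (j+1) + ff a c k * ff a c (k+1)
      - 2 * (ff a c k * ff a c j) ≥ 0 := by
    nlinarith [sq_nonneg (ff a c k - ff a c j), mul_le_mul_of_nonneg_left hmj (le_of_lt hfj),
      mul_le_mul_of_nonneg_left hmk (le_of_lt hfk)]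
  nlinarith [mul_nonneg (le_of_lt (mul_pos hrk hrj)) key2]

lemma pair_upper (ha : 0 < a) (hac : a ≤ c) (x : ℝ) (hx : 0 ≤ x) {n k : ℕ} (hk : k ≤ n) :
    a * (c+1) / (c * (a+1)) * (kterm (a+1) (c+1) x k * kterm (a+1) (c+1) x (n-k))
      + a * (c+1) / (c * (a+1)) * (kterm (a+1) (c+1) x (n-k) * kterm (a+1) (c+1) x (n-(n-k)))
    ≤ kterm a c x k * kterm (a+2) (c+2) x (n-k)
      + kterm a c x (n-k) * kterm (a+2) (c+2) x (n-(n-k)) := by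
  have hc : 0 < c := lt_of_lt_of_le ha hac
  have hnn : n - (n-k) = k := Nat.sub_sub_self hk
  rw [hnn]
  rw [kterm_eq_beta ha hc, kterm_eq_beta ha hc, kterm_eq_alpha hc, kterm_eq_alpha hc,
    kterm_eq_gamma ha hc, kterm_eq_gamma ha hc]
  set j := n - k with hj
  have h1 : (0:ℝ) < k.factorial := by exact_mod_cast Nat.factorial_pos k
  have h2 : (0:ℝ) < j.factorial := by exact_mod_cast Nat.factorial_pos j
  have hKJ : (0:ℝ) ≤ (x ^ k / k.factorial) * (x ^ j / j.factorial) := by positivity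
  have hb := bracket_ineq ha hac k j
  have hAB : (0:ℝ) < c * (c+1) / (a * (a+1)) := by
    apply div_pos <;> nlinarith
  have hlam : a * (c+1) / (c * (a+1)) * (c/a) * (c/a) = c * (c+1) / (a * (a+1)) := by
    have ha' : a ≠ 0 := ne_of_gt ha
    have hc' : c ≠ 0 := ne_of_gt hc
    have ha1 : (a:ℝ) + 1 ≠ 0 := by linarith
    have hc1 : (c:ℝ) + 1 ≠ 0 := by linarith
    field_simp
  calc a * (c+1) / (c * (a+1)) * (c / a * (rho a c (k+1) * x ^ k / k.factorial) *
          (c / a * (rho a c (j+1) * x ^ j / j.factorial)))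
        + a * (c+1) / (c * (a+1)) * (c / a * (rho a c (j+1) * x ^ j / j.factorial) *
          (c / a * (rho a c (k+1) * x ^ k / k.factorial)))
      = (a * (c+1) / (c * (a+1)) * (c/a) * (c/a)) *
          ((x ^ k / k.factorial) * (x ^ j / j.factorial)) * (2 * (rho a c (k+1) * rho a c (j+1))) := by
        ring
    _ = (c * (c+1) / (a * (a+1))) * ((x ^ k / k.factorial) * (x ^ j / j.factorial)) *
          (2 * (rho a c (k+1) * rho a c (j+1))) := by rw [hlam]
    _ ≤ (c * (c+1) / (a * (a+1))) * ((x ^ k / k.factorial) * (x ^ j / j.factorial)) *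
          (rho a c k * rho a c (j+2) + rho a c j * rho a c (k+2)) := by
        apply mul_le_mul_of_nonneg_left hb
        exact mul_nonneg (le_of_lt hAB) hKJ
    _ = rho a c k * x ^ k / k.factorial *
          (c * (c+1) / (a * (a+1)) * (rho a c (j+2) * x ^ j / j.factorial))
        + rho a c j * x ^ j / j.factorial *
          (c * (c+1) / (a * (a+1)) * (rho a c (k+2) * x ^ k / k.factorial)) := by
        ring

lemma sum_upper (ha : 0 < a) (hac : a ≤ c) (x : ℝ) (hx : 0 ≤ x) (n : ℕ) :
    a * (c+1) / (c * (a+1)) *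
        (∑ k ∈ range (n+1), kterm (a+1) (c+1) x k * kterm (a+1) (c+1) x (n-k))
      ≤ ∑ k ∈ range (n+1), kterm a c x k * kterm (a+2) (c+2) x (n-k) := by
  set g : ℕ → ℝ := fun k => kterm a c x k * kterm (a+2) (c+2) x (n-k)
      - a * (c+1) / (c * (a+1)) * (kterm (a+1) (c+1) x k * kterm (a+1) (c+1) x (n-k)) with hg
  have hsum : ∑ k ∈ range (n+1), g (n - k) = ∑ k ∈ range (n+1), g k := by
    have := Finset.sum_range_reflect g (n+1)
    simpa using this
  have h2 : 2 * ∑ k ∈ range (n+1), g k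
      = ∑ k ∈ range (n+1), (g k + g (n-k)) := by
    rw [Finset.sum_add_distrib, hsum]
    ring
  have hpos : 0 ≤ ∑ k ∈ range (n+1), (g k + g (n-k)) := by
    refine Finset.sum_nonneg fun k hk => ?_
    have hk' : k ≤ n := Nat.lt_succ_iff.mp (Finset.mem_range.mp hk)
    have := pair_upper ha hac x hx hk'
    simp only [hg]
    linarith [this]
  have : 0 ≤ ∑ k ∈ range (n+1), g k := by linarith
  have hexp : ∑ k ∈ range (n+1), g k
      = (∑ k ∈ range (n+1), kterm a c x k * kterm (a+2) (c+2) x (n-k))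
        - a * (c+1) / (c * (a+1)) *
          (∑ k ∈ range (n+1), kterm (a+1) (c+1) x k * kterm (a+1) (c+1) x (n-k)) := by
    rw [Finset.mul_sum, ← Finset.sum_sub_distrib]
  linarith [hexp ▸ this]

lemma kterm_zero (a c x : ℝ) : kterm a c x 0 = 1 := by
  simp [kterm, risingFactorial]

lemma kterm_one (a c x : ℝ) (hc : c ≠ 0) : kterm a c x 1 = a * x / c := by
  simp [kterm, risingFactorial, Finset.prod_range_one]

lemma kummer_eq_tsum (a c x : ℝ) : kummer a c x = ∑' n, kterm a c x n := rfl

end Stmt18Aux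

open Stmt18Aux in
theorem stmt_18 (a c x : ℝ) (ha : 0 < a) (hac : a ≤ c) (hx : 0 ≤ x) :
    2 * x * (c - a) / (c * (c + 1) * (c + 2)) ≤
        kummer (a + 1) (c + 1) x ^ 2 - kummer a c x * kummer (a + 2) (c + 2) x ∧
      kummer (a + 1) (c + 1) x ^ 2 - kummer a c x * kummer (a + 2) (c + 2) x ≤
        (c - a) / (c * (a + 1)) * kummer (a + 1) (c + 1) x ^ 2 := by
  have hc : 0 < c := lt_of_lt_of_le ha hac
  have ha1 : (0:ℝ) < a + 1 := by linarith
  have hc1 : (0:ℝ) < c + 1 := by linarith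
  have ha2 : (0:ℝ) < a + 2 := by linarith
  have hc2 : (0:ℝ) < c + 2 := by linarith
  have hac1 : a + 1 ≤ c + 1 := by linarith
  have hac2 : a + 2 ≤ c + 2 := by linarith
  -- summability
  have hnα := kterm_norm_summable ha hac hx
  have hnβ := kterm_norm_summable ha1 hac1 hx
  have hnγ := kterm_norm_summable ha2 hac2 hx
  -- Cauchy products
  set P : ℕ → ℝ := fun n => ∑ k ∈ Finset.range (n+1),
      kterm (a+1) (c+1) x k * kterm (a+1) (c+1) x (n-k) with hP
  set Q : ℕ → ℝ := fun n => ∑ k ∈ Finset.range (n+1),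
      kterm a c x k * kterm (a+2) (c+2) x (n-k) with hQ
  have hF1sq : kummer (a+1) (c+1) x * kummer (a+1) (c+1) x = ∑' n, P n := by
    simp only [kummer_eq_tsum]
    exact tsum_mul_tsum_eq_tsum_sum_range_of_summable_norm hnβ hnβ
  have hF0F2 : kummer a c x * kummer (a+2) (c+2) x = ∑' n, Q n := by
    simp only [kummer_eq_tsum]
    exact tsum_mul_tsum_eq_tsum_sum_range_of_summable_norm hnα hnγ
  have hsP : Summable P := (summable_norm_sum_mul_range_of_summable_norm hnβ hnβ).of_norm
  have hsQ : Summable Q := (summable_norm_sum_mul_range_of_summable_norm hnα hnγ).of_norm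
  have hpow : kummer (a+1) (c+1) x ^ 2 = kummer (a+1) (c+1) x * kummer (a+1) (c+1) x := sq _
  have hdnn : ∀ n : ℕ, 0 ≤ P n - Q n := by
    intro n
    have h := dn_nonneg ha hac x hx n
    rw [Finset.sum_sub_distrib] at h
    exact h
  constructor
  · -- lower bound
    have hdiff : kummer (a+1) (c+1) x ^ 2 - kummer a c x * kummer (a+2) (c+2) x
        = ∑' n, (P n - Q n) := by
      rw [hpow, hF1sq, hF0F2, ← Summable.tsum_sub hsP hsQ]
    rw [hdiff]
    have hle : P 1 - Q 1 ≤ ∑' n, (P n - Q n) :=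
      Summable.le_tsum (hsP.sub hsQ) 1 (fun j _ => hdnn j)
    have hval : P 1 - Q 1 = 2 * x * (c - a) / (c * (c + 1) * (c + 2)) := by
      have e1 : P 1 = kterm (a+1) (c+1) x 0 * kterm (a+1) (c+1) x 1
          + kterm (a+1) (c+1) x 1 * kterm (a+1) (c+1) x 0 := by
        simp [hP, Finset.sum_range_succ]
      have e2 : Q 1 = kterm a c x 0 * kterm (a+2) (c+2) x 1
          + kterm a c x 1 * kterm (a+2) (c+2) x 0 := by
        simp [hQ, Finset.sum_range_succ]
      rw [e1, e2, kterm_zero, kterm_zero, kterm_zero,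
        kterm_one _ _ _ (ne_of_gt hc1), kterm_one _ _ _ (ne_of_gt hc2),
        kterm_one _ _ _ (ne_of_gt hc)]
      field_simp
      ring
    rw [← hval]
    exact hle
  · -- upper bound
    have hqp : ∀ n : ℕ, a * (c+1) / (c * (a+1)) * P n ≤ Q n := fun n =>
      sum_upper ha hac x hx n
    have hsum_le : a * (c+1) / (c * (a+1)) * (∑' n, P n) ≤ ∑' n, Q n := by
      rw [← tsum_mul_left]
      exact Summable.tsum_le_tsum hqp (hsP.mul_left _) hsQ
    rw [hpow, hF1sq, hF0F2]
    have hF1nn : 0 ≤ ∑' n, P n := by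
      rw [← hF1sq]
      have : 0 ≤ kummer (a+1) (c+1) x := by
        rw [kummer_eq_tsum]
        exact tsum_nonneg (fun n => kterm_nonneg ha1 hc1 hx n)
      exact mul_nonneg this this
    have hid : (c - a) / (c * (a+1)) = 1 - a * (c+1) / (c * (a+1)) := by
      field_simp
      ring
    rw [hid]
    nlinarith [hsum_le, hF1nn]
end

section
/- Let a ≥ c > 0 and x ≥ 0. Then (a−c)/(c(c+1)) ≤ (a/c)·₁F₁(a+1;c+1;x)² − ((a+1)/(c+1))·₁F₁(a;c;x)·₁F₁(a+2;c+2;x) ≤ (a−c)/(c(c+1)) · ₁F₁(a+1;c+1;x)². -/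
noncomputable def Pc (a c : ℝ) (n : ℕ) : ℝ :=
  risingFactorial a n / (risingFactorial c n * n.factorial)

lemma rf_pos {a : ℝ} (ha : 0 < a) (n : ℕ) : 0 < risingFactorial a n :=
  Finset.prod_pos fun i _ => by positivity

lemma rf_succ (a : ℝ) (n : ℕ) : risingFactorial a (n + 1) = risingFactorial a n * (a + n) :=
  Finset.prod_range_succ _ _

lemma rf_shift (a : ℝ) (n : ℕ) : risingFactorial a (n + 1) = a * risingFactorial (a + 1) n := by
  rw [risingFactorial, Finset.prod_range_succ', Nat.cast_zero, add_zero, mul_comm]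
  congr 1
  unfold risingFactorial
  exact Finset.prod_congr rfl fun i _ => by push_cast; ring

lemma kummer_eq (a c x : ℝ) : kummer a c x = ∑' n, Pc a c n * x ^ n := by
  unfold kummer Pc
  exact tsum_congr fun n => by ring

lemma Pc_pos {a c : ℝ} (ha : 0 < a) (hc : 0 < c) (n : ℕ) : 0 < Pc a c n := by
  unfold Pc
  have := rf_pos ha n
  have := rf_pos hc n
  positivity

lemma Pc_succ (a c : ℝ) (n : ℕ) :
    Pc a c (n + 1) = Pc a c n * ((a + n) / ((c + n) * (n + 1))) := by
  unfold Pc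
  rw [rf_succ a, rf_succ c, Nat.factorial_succ, div_mul_div_comm]
  push_cast
  congr 1
  ring

lemma Pc_zero (a c : ℝ) : Pc a c 0 = 1 := by simp [Pc, risingFactorial]

lemma Pc_shift {a c : ℝ} (hc : 0 < c) (j : ℕ) :
    a / c * Pc (a + 1) (c + 1) j = ((j : ℝ) + 1) * Pc a c (j + 1) := by
  have h1 : risingFactorial (c+1) j ≠ 0 := ne_of_gt (rf_pos (by linarith) j)
  have h2 : ((j.factorial : ℕ) : ℝ) ≠ 0 := Nat.cast_ne_zero.mpr j.factorial_ne_zero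
  have h3 : ((j:ℝ) + 1) ≠ 0 := by positivity
  unfold Pc
  rw [rf_shift a, rf_shift c, Nat.factorial_succ]
  push_cast
  field_simp

lemma Pc_le {a c : ℝ} (hc : 0 < c) (hac : c ≤ a) (n : ℕ) :
    Pc a c n ≤ (a / c) ^ n / n.factorial := by
  have ha : 0 < a := lt_of_lt_of_le hc hac
  induction n with
  | zero => simp [Pc_zero]
  | succ n ih =>
    have h0 : (0:ℝ) ≤ (n:ℝ) := n.cast_nonneg
    have h1 : (0:ℝ) < c + n := by positivity
    have hstep : (a + n) / ((c + n) * (n + 1)) ≤ (a / c) / (n + 1) := by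
      rw [div_div]
      rw [div_le_div_iff₀ (by positivity) (by positivity)]
      nlinarith [mul_nonneg (mul_nonneg h0 (by positivity : (0:ℝ) ≤ (n:ℝ)+1)) (sub_nonneg.mpr hac)]
    calc Pc a c (n+1) = Pc a c n * ((a + n) / ((c + n) * (n + 1))) := Pc_succ a c n
      _ ≤ ((a/c)^n / n.factorial) * ((a / c) / (n + 1)) := by
          apply mul_le_mul ih hstep (by positivity) (by positivity)
      _ = (a/c)^(n+1) / (n+1).factorial := by
          rw [div_mul_div_comm, ← pow_succ, Nat.factorial_succ]
          push_cast
          ring_nf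

lemma summable_Pc {a c : ℝ} (x : ℝ) (hc : 0 < c) (hac : c ≤ a) (hx : 0 ≤ x) :
    Summable fun n => Pc a c n * x ^ n := by
  have ha : 0 < a := lt_of_lt_of_le hc hac
  apply Summable.of_nonneg_of_le (fun n => by have := Pc_pos ha hc n; positivity)
    (fun n => ?_) (Real.summable_pow_div_factorial (a / c * x))
  calc Pc a c n * x ^ n ≤ ((a/c)^n / n.factorial) * x ^ n :=
        mul_le_mul_of_nonneg_right (Pc_le hc hac n) (by positivity)
    _ = (a / c * x) ^ n / n.factorial := by rw [mul_pow]; ring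

lemma Pc_cross {a c : ℝ} (hc : 0 < c) (hac : c ≤ a) (m k : ℕ) :
    Pc a c m * Pc (a+1) (c+1) (m+k) ≤ Pc a c (m+k) * Pc (a+1) (c+1) m := by
  have ha : 0 < a := lt_of_lt_of_le hc hac
  induction k with
  | zero => rw [Nat.add_zero]
  | succ k ih =>
    have h0 : (0:ℝ) ≤ ((m+k : ℕ):ℝ) := Nat.cast_nonneg _
    have hf : ((a+1) + ((m+k:ℕ):ℝ)) / ((c+1 + ((m+k:ℕ):ℝ)) * ((m+k:ℕ) + 1)) ≤
        (a + ((m+k:ℕ):ℝ)) / ((c + ((m+k:ℕ):ℝ)) * ((m+k:ℕ) + 1)) := by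
      rw [div_le_div_iff₀ (by positivity) (by positivity)]
      nlinarith
    have hQ : (0:ℝ) < Pc (a+1) (c+1) (m+k) := Pc_pos (by linarith) (by linarith) _
    have hP : (0:ℝ) < Pc a c (m+k) := Pc_pos ha hc _
    have hQm : (0:ℝ) < Pc (a+1) (c+1) m := Pc_pos (by linarith) (by linarith) _
    have hPm : (0:ℝ) < Pc a c m := Pc_pos ha hc _
    have := mul_le_mul ih hf (by positivity) (by positivity)
    calc Pc a c m * Pc (a+1) (c+1) (m+(k+1))
        = (Pc a c m * Pc (a+1) (c+1) (m+k)) *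
            (((a+1) + ((m+k:ℕ):ℝ)) / ((c+1 + ((m+k:ℕ):ℝ)) * ((m+k:ℕ) + 1))) := by
          rw [show m + (k+1) = (m+k)+1 from rfl, Pc_succ]; ring
      _ ≤ (Pc a c (m+k) * Pc (a+1) (c+1) m) *
            ((a + ((m+k:ℕ):ℝ)) / ((c + ((m+k:ℕ):ℝ)) * ((m+k:ℕ) + 1))) := this
      _ = Pc a c (m+(k+1)) * Pc (a+1) (c+1) m := by
          rw [show m + (k+1) = (m+k)+1 from rfl, Pc_succ]; ring

lemma Pc_logconv {a c : ℝ} (hc : 0 < c) (hac : c ≤ a) (n : ℕ) :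
    Pc (a+1) (c+1) n ^ 2 ≤ Pc a c n * Pc (a+2) (c+2) n := by
  have ha : 0 < a := lt_of_lt_of_le hc hac
  induction n with
  | zero => simp [Pc_zero]
  | succ n ih =>
    have h0 : (0:ℝ) ≤ (n:ℝ) := n.cast_nonneg
    have hP : (0:ℝ) < Pc a c n := Pc_pos ha hc _
    have hQ : (0:ℝ) < Pc (a+1) (c+1) n := Pc_pos (by linarith) (by linarith) _
    have hR : (0:ℝ) < Pc (a+2) (c+2) n := Pc_pos (by linarith) (by linarith) _
    have h5 : (c + n + 1)^2 ≤ (a + n + 1)^2 := by nlinarith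
    have key : (((a+1) + (n:ℝ)) / ((c+1 + (n:ℝ)) * (n + 1)))^2 ≤
        ((a + (n:ℝ)) / ((c + (n:ℝ)) * (n + 1))) * (((a+2) + (n:ℝ)) / ((c+2 + (n:ℝ)) * (n + 1))) := by
      rw [div_pow, div_mul_div_comm, div_le_div_iff₀ (by positivity) (by positivity)]
      nlinarith [mul_nonneg (mul_nonneg (sq_nonneg ((n:ℝ)+1)) (sub_nonneg.mpr h5)) (sq_nonneg ((n:ℝ)+1)), sq_nonneg ((n:ℝ)+1), mul_nonneg (sq_nonneg ((n:ℝ)+1)) (sub_nonneg.mpr h5)]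
    calc Pc (a+1) (c+1) (n+1) ^ 2
        = Pc (a+1) (c+1) n ^2 * (((a+1) + (n:ℝ)) / ((c+1 + (n:ℝ)) * (n + 1)))^2 := by
          rw [Pc_succ]; ring
      _ ≤ (Pc a c n * Pc (a+2) (c+2) n) * ((( a + (n:ℝ)) / ((c + (n:ℝ)) * (n + 1))) * (((a+2) + (n:ℝ)) / ((c+2 + (n:ℝ)) * (n + 1)))) := by
          apply mul_le_mul ih key (by positivity) (by positivity)
      _ = Pc a c (n+1) * Pc (a+2) (c+2) (n+1) := by
          rw [Pc_succ, Pc_succ]; ring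

lemma Pc_cross' {a c : ℝ} (hc : 0 < c) (hac : c ≤ a) {m j : ℕ} (h : m ≤ j) :
    Pc a c m * Pc (a+1) (c+1) j ≤ Pc a c j * Pc (a+1) (c+1) m := by
  obtain ⟨k, rfl⟩ := Nat.exists_eq_add_of_le h
  exact Pc_cross hc hac m k

lemma wsum_nonneg {a c : ℝ} (hc : 0 < c) (hac : c ≤ a) (N : ℕ) :
    0 ≤ ∑ k ∈ Finset.range (N+1),
      ((k:ℝ) - ((N-k:ℕ):ℝ)) * (Pc a c k * Pc (a+1) (c+1) (N-k)) := by
  set f : ℕ → ℝ :=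
    fun k => ((k:ℝ) - ((N-k:ℕ):ℝ)) * (Pc a c k * Pc (a+1) (c+1) (N-k)) with hf
  have hrefl : ∑ k ∈ Finset.range (N+1), f (N - k) = ∑ k ∈ Finset.range (N+1), f k := by
    simpa using Finset.sum_range_reflect f (N+1)
  have h2S : (∑ k ∈ Finset.range (N+1), f k) * 2
      = ∑ k ∈ Finset.range (N+1), (f k + f (N - k)) := by
    rw [Finset.sum_add_distrib, hrefl]; ring
  have hterm : ∀ k ∈ Finset.range (N+1), 0 ≤ f k + f (N - k) := by
    intro k hk
    rw [Finset.mem_range, Nat.lt_succ_iff] at hk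
    have hNk : N - (N - k) = k := Nat.sub_sub_self hk
    have heq : f k + f (N - k)
        = ((k:ℝ) - ((N-k:ℕ):ℝ)) *
            (Pc a c k * Pc (a+1) (c+1) (N-k) - Pc a c (N-k) * Pc (a+1) (c+1) k) := by
      simp only [hf, hNk]
      ring
    rw [heq]
    rcases le_total (N - k) k with h | h
    · apply mul_nonneg
      · simp only [sub_nonneg]
        exact_mod_cast h
      · exact sub_nonneg.mpr (Pc_cross' hc hac h)
    · have h1 : ((k:ℝ) - ((N-k:ℕ):ℝ)) ≤ 0 := by
        simp only [sub_nonpos]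
        exact_mod_cast h
      have h2 : Pc a c k * Pc (a+1) (c+1) (N-k) - Pc a c (N-k) * Pc (a+1) (c+1) k ≤ 0 :=
        sub_nonpos.mpr (Pc_cross' hc hac h)
      have := mul_nonneg (neg_nonneg.mpr h1) (neg_nonneg.mpr h2)
      rwa [neg_mul_neg] at this
  nlinarith [Finset.sum_nonneg hterm, h2S]

lemma lower_coef {a c : ℝ} (hc : 0 < c) (hac : c ≤ a) (n : ℕ) :
    0 ≤ ∑ jm ∈ Finset.HasAntidiagonal.antidiagonal n,
      (a / c * (Pc (a+1) (c+1) jm.1 * Pc (a+1) (c+1) jm.2)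
        - (a+1) / (c+1) * (Pc a c jm.1 * Pc (a+2) (c+2) jm.2)) := by
  have ha : 0 < a := lt_of_lt_of_le hc hac
  rw [Finset.Nat.sum_antidiagonal_eq_sum_range_succ
    (fun j m => a / c * (Pc (a+1) (c+1) j * Pc (a+1) (c+1) m)
        - (a+1) / (c+1) * (Pc a c j * Pc (a+2) (c+2) m))]
  have hrw : ∀ k ∈ Finset.range (n+1),
      a / c * (Pc (a+1) (c+1) k * Pc (a+1) (c+1) (n-k))
        - (a+1) / (c+1) * (Pc a c k * Pc (a+2) (c+2) (n-k))
      = ((k:ℝ)+1) * Pc a c (k+1) * Pc (a+1) (c+1) (n-k)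
        - (((n-k:ℕ):ℝ)+1) * Pc a c k * Pc (a+1) (c+1) (n-k+1) := by
    intro k _
    rw [show a / c * (Pc (a+1) (c+1) k * Pc (a+1) (c+1) (n-k))
        = (a / c * Pc (a+1) (c+1) k) * Pc (a+1) (c+1) (n-k) by ring, Pc_shift hc k]
    have h2 : (a+1) / (c+1) * Pc ((a+1) + 1) ((c+1) + 1) (n-k)
        = (((n-k:ℕ):ℝ)+1) * Pc (a+1) (c+1) ((n-k) + 1) :=
      Pc_shift (by linarith) (n-k)
    rw [show (a+1) / (c+1) * (Pc a c k * Pc (a+2) (c+2) (n-k))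
        = ((a+1) / (c+1) * Pc ((a+1)+1) ((c+1)+1) (n-k)) * Pc a c k by ring_nf, h2]
    ring
  rw [Finset.sum_congr rfl hrw, Finset.sum_sub_distrib]
  have e1 : ∑ k ∈ Finset.range (n+1), ((k:ℝ)+1) * Pc a c (k+1) * Pc (a+1) (c+1) (n-k)
      = ∑ k ∈ Finset.range (n+2), (k:ℝ) * (Pc a c k * Pc (a+1) (c+1) (n+1-k)) := by
    rw [Finset.sum_range_succ' (fun k => (k:ℝ) * (Pc a c k * Pc (a+1) (c+1) (n+1-k))) (n+1)]
    simp only [Nat.cast_zero, zero_mul, add_zero, Nat.succ_sub_succ]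
    apply Finset.sum_congr rfl
    intro k _
    push_cast
    ring
  have e2 : ∑ k ∈ Finset.range (n+1), (((n-k:ℕ):ℝ)+1) * Pc a c k * Pc (a+1) (c+1) (n-k+1)
      = ∑ k ∈ Finset.range (n+2), (((n+1-k:ℕ):ℝ)) * (Pc a c k * Pc (a+1) (c+1) (n+1-k)) := by
    rw [show n+2 = (n+1)+1 from rfl, Finset.sum_range_succ
      (fun k => (((n+1-k:ℕ):ℝ)) * (Pc a c k * Pc (a+1) (c+1) (n+1-k))) (n+1)]
    simp only [Nat.sub_self, Nat.cast_zero, zero_mul, add_zero]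
    apply Finset.sum_congr rfl
    intro k hk
    rw [Finset.mem_range, Nat.lt_succ_iff] at hk
    have : n + 1 - k = (n - k) + 1 := by omega
    rw [this]
    push_cast
    ring
  rw [e1, e2, ← Finset.sum_sub_distrib]
  have := wsum_nonneg hc hac (n+1)
  calc (0:ℝ) ≤ ∑ k ∈ Finset.range ((n+1)+1),
        ((k:ℝ) - (((n+1)-k:ℕ):ℝ)) * (Pc a c k * Pc (a+1) (c+1) ((n+1)-k)) := this
    _ = ∑ k ∈ Finset.range (n+2),
        ((k:ℝ) * (Pc a c k * Pc (a+1) (c+1) (n+1-k))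
          - ((n+1-k:ℕ):ℝ) * (Pc a c k * Pc (a+1) (c+1) (n+1-k))) := by
      apply Finset.sum_congr rfl
      intro k _
      ring

lemma upper_coef {a c : ℝ} (hc : 0 < c) (hac : c ≤ a) (n : ℕ) :
    0 ≤ ∑ jm ∈ Finset.HasAntidiagonal.antidiagonal n,
      (Pc a c jm.1 * Pc (a+2) (c+2) jm.2 - Pc (a+1) (c+1) jm.1 * Pc (a+1) (c+1) jm.2) := by
  have ha : 0 < a := lt_of_lt_of_le hc hac
  rw [Finset.Nat.sum_antidiagonal_eq_sum_range_succ
    (fun j m => Pc a c j * Pc (a+2) (c+2) m - Pc (a+1) (c+1) j * Pc (a+1) (c+1) m)]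
  set f : ℕ → ℝ := fun k =>
    Pc a c k * Pc (a+2) (c+2) (n-k) - Pc (a+1) (c+1) k * Pc (a+1) (c+1) (n-k) with hf
  have hrefl : ∑ k ∈ Finset.range (n+1), f (n - k) = ∑ k ∈ Finset.range (n+1), f k := by
    simpa using Finset.sum_range_reflect f (n+1)
  have h2S : (∑ k ∈ Finset.range (n+1), f k) * 2
      = ∑ k ∈ Finset.range (n+1), (f k + f (n - k)) := by
    rw [Finset.sum_add_distrib, hrefl]; ring
  have hterm : ∀ k ∈ Finset.range (n+1), 0 ≤ f k + f (n - k) := by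
    intro k hk
    rw [Finset.mem_range, Nat.lt_succ_iff] at hk
    have hNk : n - (n - k) = k := Nat.sub_sub_self hk
    have hq1 := Pc_logconv hc hac k
    have hq2 := Pc_logconv hc hac (n - k)
    have hPk := Pc_pos ha hc k
    have hPm := Pc_pos ha hc (n-k)
    have hQk := Pc_pos (show (0:ℝ) < a+1 by linarith) (show (0:ℝ) < c+1 by linarith) k
    have hQm := Pc_pos (show (0:ℝ) < a+1 by linarith) (show (0:ℝ) < c+1 by linarith) (n-k)
    have hRk := Pc_pos (show (0:ℝ) < a+2 by linarith) (show (0:ℝ) < c+2 by linarith) k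
    have hRm := Pc_pos (show (0:ℝ) < a+2 by linarith) (show (0:ℝ) < c+2 by linarith) (n-k)
    simp only [hf, hNk]
    set u := Pc a c k * Pc (a+2) (c+2) (n-k) with hu
    set v := Pc a c (n-k) * Pc (a+2) (c+2) k with hv
    set q := Pc (a+1) (c+1) k * Pc (a+1) (c+1) (n-k) with hq
    have huv : q^2 ≤ u * v := by
      have h := mul_le_mul hq1 hq2 (sq_nonneg _) (by positivity)
      calc q^2 = Pc (a+1) (c+1) k ^2 * Pc (a+1) (c+1) (n-k) ^2 := by rw [hq]; ring
        _ ≤ (Pc a c k * Pc (a+2) (c+2) k) * (Pc a c (n-k) * Pc (a+2) (c+2) (n-k)) := h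
        _ = u * v := by rw [hu, hv]; ring
    have hqpos : 0 < q := mul_pos hQk hQm
    have hupos : 0 < u := mul_pos hPk hRm
    have hvpos : 0 < v := mul_pos hPm hRk
    have h4 : (2*q)^2 ≤ (u+v)^2 := by nlinarith [sq_nonneg (u - v)]
    have h5 : 2*q ≤ u + v := by nlinarith [h4]
    linarith
  nlinarith [Finset.sum_nonneg hterm, h2S]

theorem stmt_19 (a c x : ℝ) (hc : 0 < c) (hac : c ≤ a) (hx : 0 ≤ x) :
    (a - c) / (c * (c + 1)) ≤
        a / c * kummer (a + 1) (c + 1) x ^ 2 -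
          (a + 1) / (c + 1) * kummer a c x * kummer (a + 2) (c + 2) x ∧
      a / c * kummer (a + 1) (c + 1) x ^ 2 -
          (a + 1) / (c + 1) * kummer a c x * kummer (a + 2) (c + 2) x ≤
        (a - c) / (c * (c + 1)) * kummer (a + 1) (c + 1) x ^ 2 := by
  have ha : 0 < a := lt_of_lt_of_le hc hac
  set f0 : ℕ → ℝ := fun n => Pc a c n * x ^ n with hf0
  set f1 : ℕ → ℝ := fun n => Pc (a+1) (c+1) n * x ^ n with hf1
  set f2 : ℕ → ℝ := fun n => Pc (a+2) (c+2) n * x ^ n with hf2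
  have h0 : Summable f0 := summable_Pc x hc hac hx
  have h1 : Summable f1 := summable_Pc x (by linarith) (by linarith) hx
  have h2 : Summable f2 := summable_Pc x (by linarith) (by linarith) hx
  have hnn0 : ∀ n, 0 ≤ f0 n := fun n => by
    have := Pc_pos ha hc n; simp only [hf0]; positivity
  have hnn1 : ∀ n, 0 ≤ f1 n := fun n => by
    have := Pc_pos (show (0:ℝ) < a+1 by linarith) (show (0:ℝ) < c+1 by linarith) n
    simp only [hf1]; positivity
  have hnn2 : ∀ n, 0 ≤ f2 n := fun n => by
    have := Pc_pos (show (0:ℝ) < a+2 by linarith) (show (0:ℝ) < c+2 by linarith) n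
    simp only [hf2]; positivity
  have hne : ∀ (g : ℕ → ℝ), (∀ n, 0 ≤ g n) → (fun n => ‖g n‖) = g := fun g hg =>
    funext fun n => by rw [Real.norm_eq_abs, abs_of_nonneg (hg n)]
  have hn0 : Summable fun n => ‖f0 n‖ := by rw [hne f0 hnn0]; exact h0
  have hn1 : Summable fun n => ‖f1 n‖ := by rw [hne f1 hnn1]; exact h1
  have hn2 : Summable fun n => ‖f2 n‖ := by rw [hne f2 hnn2]; exact h2
  -- Cauchy products
  set G : ℕ → ℝ := fun n => ∑ jm ∈ Finset.HasAntidiagonal.antidiagonal n, f1 jm.1 * f1 jm.2 with hG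
  set H : ℕ → ℝ := fun n => ∑ jm ∈ Finset.HasAntidiagonal.antidiagonal n, f0 jm.1 * f2 jm.2 with hH
  have hGsum : Summable G :=
    summable_sum_mul_antidiagonal_of_summable_norm' hn1 h1 hn1 h1
  have hHsum : Summable H :=
    summable_sum_mul_antidiagonal_of_summable_norm' hn0 h0 hn2 h2
  have hT1 : kummer (a+1) (c+1) x ^ 2 = ∑' n, G n := by
    rw [sq, kummer_eq]
    exact tsum_mul_tsum_eq_tsum_sum_antidiagonal_of_summable_norm hn1 hn1
  have hT02 : kummer a c x * kummer (a+2) (c+2) x = ∑' n, H n := by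
    rw [kummer_eq, kummer_eq]
    exact tsum_mul_tsum_eq_tsum_sum_antidiagonal_of_summable_norm hn0 hn2
  -- coefficient sums
  set g : ℕ → ℝ := fun n => ∑ jm ∈ Finset.HasAntidiagonal.antidiagonal n,
    Pc (a+1) (c+1) jm.1 * Pc (a+1) (c+1) jm.2 with hg
  set h : ℕ → ℝ := fun n => ∑ jm ∈ Finset.HasAntidiagonal.antidiagonal n,
    Pc a c jm.1 * Pc (a+2) (c+2) jm.2 with hh
  have hGx : ∀ n, G n = x ^ n * g n := by
    intro n
    simp only [hG, hg, Finset.mul_sum]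
    apply Finset.sum_congr rfl
    intro jm hjm
    rw [Finset.HasAntidiagonal.mem_antidiagonal] at hjm
    simp only [hf1]
    rw [← hjm, pow_add]
    ring
  have hHx : ∀ n, H n = x ^ n * h n := by
    intro n
    simp only [hH, hh, Finset.mul_sum]
    apply Finset.sum_congr rfl
    intro jm hjm
    rw [Finset.HasAntidiagonal.mem_antidiagonal] at hjm
    simp only [hf0, hf2]
    rw [← hjm, pow_add]
    ring
  set D : ℕ → ℝ := fun n => ∑ jm ∈ Finset.HasAntidiagonal.antidiagonal n,
      (a / c * (Pc (a+1) (c+1) jm.1 * Pc (a+1) (c+1) jm.2)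
        - (a+1) / (c+1) * (Pc a c jm.1 * Pc (a+2) (c+2) jm.2)) with hD
  have hDgh : ∀ n, D n = a / c * g n - (a+1)/(c+1) * h n := by
    intro n
    simp only [hD, hg, hh, Finset.sum_sub_distrib, Finset.mul_sum]
  have hkey : ∀ n, a / c * G n - (a+1)/(c+1) * H n = x ^ n * D n := by
    intro n
    rw [hGx n, hHx n, hDgh n]
    ring
  have hSd : Summable (fun n => x ^ n * D n) := by
    have : (fun n => x ^ n * D n) = fun n => a / c * G n - (a+1)/(c+1) * H n :=
      funext fun n => (hkey n).symm
    rw [this]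
    exact (hGsum.mul_left _).sub (hHsum.mul_left _)
  have hΔ : a / c * kummer (a+1) (c+1) x ^ 2 -
      (a+1)/(c+1) * kummer a c x * kummer (a+2) (c+2) x = ∑' n, x ^ n * D n := by
    rw [hT1, mul_assoc, hT02, ← tsum_mul_left, ← tsum_mul_left,
      ← Summable.tsum_sub (hGsum.mul_left (a/c)) (hHsum.mul_left ((a+1)/(c+1)))]
    exact tsum_congr hkey
  have hD0 : D 0 = (a - c) / (c * (c + 1)) := by
    simp only [hD, Finset.Nat.antidiagonal_zero, Finset.sum_singleton, Pc_zero]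
    have hc1 : c + 1 ≠ 0 := by positivity
    field_simp
    ring
  constructor
  · rw [hΔ]
    have := Summable.le_tsum hSd 0 (fun b _ => mul_nonneg (pow_nonneg hx b) (lower_coef hc hac b))
    simpa [hD0] using this
  · rw [hΔ, hT1, ← tsum_mul_left]
    apply Summable.tsum_le_tsum _ hSd (hGsum.mul_left _)
    intro n
    rw [hGx n]
    have hup := upper_coef hc hac n
    have hgh : 0 ≤ h n - g n := by
      have : h n - g n = ∑ jm ∈ Finset.HasAntidiagonal.antidiagonal n,
          (Pc a c jm.1 * Pc (a+2) (c+2) jm.2 - Pc (a+1) (c+1) jm.1 * Pc (a+1) (c+1) jm.2) := by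
        simp only [hg, hh, Finset.sum_sub_distrib]
      rw [this]
      exact hup
    have hc1 : (0:ℝ) < c + 1 := by linarith
    have hlam : (a - c) / (c * (c + 1)) = a / c - (a+1)/(c+1) := by
      field_simp
      ring
    have hDle : D n ≤ (a - c) / (c * (c + 1)) * g n := by
      rw [hDgh n, hlam]
      have hfrac : (0:ℝ) ≤ (a+1)/(c+1) := by positivity
      nlinarith [mul_nonneg hfrac hgh]
    calc x ^ n * D n ≤ x ^ n * ((a - c) / (c * (c + 1)) * g n) :=
          mul_le_mul_of_nonneg_left hDle (pow_nonneg hx n)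
      _ = (a - c) / (c * (c + 1)) * (x ^ n * g n) := by ring
end
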